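/- arXiv:2112.00630 — 7 statements merged into one kernel-verified Lean document; each statement's English description precedes it below -/
import Mathlib

section
/- For the free group F_r on r generators (r a positive natural number or countably infinite), the function g ↦ (−1)^{‖g‖₂²} is positive definite on F_r. -/
/-!
Since `k² ≡ k (mod 2)`, the parity of `‖g‖₂²` is that of the word length of `g`, so
`g ↦ (-1)^{‖g‖₂²}` is the character of the free group sending every generator to `-1`.
A `±1`-valued character satisfies `χ(x⁻¹y) = χ(x)χ(y)`, so its quadratic form is
`|∑ j, c j χ(x j)|² ≥ 0`.
-/

open ComplexOrder

/-- Sum of squared block lengths of a reduced word, given the generator of the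
current block and its current length. Blocks are maximal runs of the same generator. -/
def blockSqSumAux {ι : Type*} [DecidableEq ι] (a : ι) (n : ℕ) :
    List (ι × Bool) → ℕ
  | [] => n ^ 2
  | (b, _) :: l => if b = a then blockSqSumAux a (n + 1) l else n ^ 2 + blockSqSumAux b 1 l

/-- The squared ℓ² length of an element of a free group: for a reduced block form
`g = a₁^{k₁} ⋯ a_n^{k_n}` it equals `∑ i, k_i²`. -/
def l2sq {ι : Type*} [DecidableEq ι] (g : FreeGroup ι) : ℕ :=
  match FreeGroup.toWord g with
  | [] => 0
  | (a, _) :: l => blockSqSumAux a 1 l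

/-- A real-valued function on a group is positive definite. -/
def IsPositiveDefinite {G : Type*} [Group G] (φ : G → ℝ) : Prop :=
  ∀ (n : ℕ) (x : Fin n → G) (c : Fin n → ℂ),
    0 ≤ ∑ j, ∑ k, c j * (starRingEnd ℂ) (c k) * (φ ((x j)⁻¹ * x k) : ℂ)

lemma Nat.sq_modEq_self_two (n : ℕ) : n ^ 2 ≡ n [MOD 2] := by
  rcases Nat.mod_two_eq_zero_or_one n with h | h <;> simp [Nat.ModEq, Nat.pow_mod, h]

lemma Int.units_pow_congr_of_modEq_two (u : ℤˣ) {m n : ℕ} (h : m ≡ n [MOD 2]) :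
    u ^ m = u ^ n := by
  rw [Int.units_pow_eq_pow_mod_two, h, ← Int.units_pow_eq_pow_mod_two]

theorem isPositiveDefinite_units_int {G : Type*} [Group G] (χ : G →* ℤˣ) :
    IsPositiveDefinite (fun g => ((χ g : ℤ) : ℝ)) := by
  intro n x c
  set w : Fin n → ℂ := fun j => c j * ((χ (x j) : ℤ) : ℂ)
  have hfactor : ∀ j k,
      c j * (starRingEnd ℂ) (c k) * (((χ ((x j)⁻¹ * x k) : ℤ) : ℝ) : ℂ) =
        w j * (starRingEnd ℂ) (w k) := by
    intro j k
    simp only [w, map_mul, map_inv, Int.units_inv_eq_self, Units.val_mul, map_intCast]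
    push_cast
    ring
  calc (0 : ℂ) ≤ ((Complex.normSq (∑ j, w j) : ℝ) : ℂ) := by
        exact_mod_cast Complex.normSq_nonneg _
    _ = (∑ j, w j) * (starRingEnd ℂ) (∑ k, w k) := (Complex.mul_conj _).symm
    _ = _ := by simp only [map_sum, Finset.sum_mul_sum, hfactor]

lemma blockSqSumAux_modEq {ι : Type*} [DecidableEq ι] (l : List (ι × Bool)) (a : ι) (n : ℕ) :
    blockSqSumAux a n l ≡ n + l.length [MOD 2] := by
  induction l generalizing a n with
  | nil => simpa [blockSqSumAux] using Nat.sq_modEq_self_two n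
  | cons hd tl ih =>
    obtain ⟨b, _⟩ := hd
    simp only [blockSqSumAux, List.length_cons]
    split_ifs
    · exact (ih a (n + 1)).trans (by rw [add_right_comm, add_assoc])
    · exact ((Nat.sq_modEq_self_two n).add (ih b 1)).trans (by rw [add_comm 1])

lemma l2sq_modEq_length {ι : Type*} [DecidableEq ι] (g : FreeGroup ι) :
    l2sq g ≡ g.toWord.length [MOD 2] := by
  unfold l2sq
  split
  next h => rw [h]; rfl
  next a _ l h => simpa [h, add_comm] using blockSqSumAux_modEq l a 1

def FreeGroup.sign {ι : Type*} : FreeGroup ι →* ℤˣ :=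
  FreeGroup.lift fun _ => -1

lemma FreeGroup.sign_mk {ι : Type*} (L : List (ι × Bool)) :
    FreeGroup.sign (FreeGroup.mk L) = (-1) ^ L.length := by
  simp [FreeGroup.sign, FreeGroup.lift_mk]

lemma FreeGroup.sign_eq_neg_one_pow_l2sq {ι : Type*} [DecidableEq ι] (g : FreeGroup ι) :
    FreeGroup.sign g = (-1) ^ l2sq g := by
  rw [Int.units_pow_congr_of_modEq_two _ (l2sq_modEq_length g), ← FreeGroup.sign_mk,
    FreeGroup.mk_toWord]

theorem neg_one_pow_l2sq_posDef_general
    {ι : Type*} [DecidableEq ι] :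
    IsPositiveDefinite (fun g : FreeGroup ι => (-1 : ℝ) ^ l2sq g) := by
  convert isPositiveDefinite_units_int (FreeGroup.sign (ι := ι)) using 2 with g
  rw [FreeGroup.sign_eq_neg_one_pow_l2sq]
  push_cast
  rfl

/-- On the free group `F_r` on `r` generators (`r` a positive natural number or countably
infinite), the function `g ↦ (−1)^{‖g‖₂²}` is positive definite. -/
theorem neg_one_pow_l2sq_posDef
    {ι : Type*} [DecidableEq ι] [Countable ι] [Nonempty ι] :
    IsPositiveDefinite (fun g : FreeGroup ι => (-1 : ℝ) ^ l2sq g) :=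
  neg_one_pow_l2sq_posDef_general
end

section
/- Define T : F_r → ℓ²(F_r) by sending the identity to 0 and a reduced block form g = a₁^{k₁} a₂^{k₂} ⋯ a_n^{k_n} to T(g) = k₁ δ_{a₁} + k₂ δ_{a₁^{k₁} a₂} + ⋯ + k_n δ_{a₁^{k₁} a₂^{k₂} ⋯ a_{n−1}^{k_{n−1}} a_n}, where δ_x denotes the standard basis vector of ℓ²(F_r) at x ∈ F_r. Then for all f, g ∈ F_r, ‖T(g) − T(f)‖² = ‖f⁻¹ g‖₂². -/
open ComplexOrder

/-- Auxiliary construction for `T`: given the product `pre` of the blocks already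
processed, the generator `a` and signed exponent `k` of the current block, and the rest
of the reduced word, build the corresponding element of `ℓ²(F_r)`. -/
noncomputable def TAux {ι : Type*} [DecidableEq ι] (pre : FreeGroup ι) (a : ι) (k : ℤ) :
    List (ι × Bool) → lp (fun _ : FreeGroup ι => ℝ) 2
  | [] => (k : ℝ) • lp.single 2 (pre * FreeGroup.of a) 1
  | (b, s) :: l =>
    if b = a then TAux pre a (k + (if s then 1 else -1)) l
    else (k : ℝ) • lp.single 2 (pre * FreeGroup.of a) 1
        + TAux (pre * FreeGroup.of a ^ k) b (if s then 1 else -1) l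

/-- The map `T : F_r → ℓ²(F_r)` sending the identity to `0` and a reduced block form
`g = a₁^{k₁} a₂^{k₂} ⋯ a_n^{k_n}` to
`k₁ δ_{a₁} + k₂ δ_{a₁^{k₁} a₂} + ⋯ + k_n δ_{a₁^{k₁} ⋯ a_{n−1}^{k_{n−1}} a_n}`,
where `δ_x = lp.single 2 x 1` is the standard basis vector at `x`. -/
noncomputable def T {ι : Type*} [DecidableEq ι] (g : FreeGroup ι) :
    lp (fun _ : FreeGroup ι => ℝ) 2 :=
  match FreeGroup.toWord g with
  | [] => 0
  | (a, s) :: l => TAux 1 a (if s then 1 else -1) l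

/-!
Encode a reduced block form `a₁^{k₁} ⋯ aₙ^{kₙ}` as the list `[(a₁, k₁), …, (aₙ, kₙ)]`. It can be
read back from the reduced word, so distinct block forms are distinct group elements; hence the
points `a₁^{k₁} ⋯ a_{i-1}^{k_{i-1}} aᵢ` carrying `T g` are pairwise distinct and `‖T g‖² = ∑ kᵢ²`.

To compare `T f` with `T g`, strip the leading blocks that `f` and `g` share: such a block
contributes the same term to both vectors and cancels in `f⁻¹ g`. Afterwards either the first
generators differ, so the two vectors have disjoint supports and the block form of `f⁻¹ g` is that
of `f` inverted followed by that of `g`; or the first blocks are `a^j` and `a^k` with `j ≠ k`, and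
the two terms at the common point merge into one with coefficient `k - j`, just as `a^{-j} a^k`
merges into the single block `a^{k-j}` of `f⁻¹ g`.
-/

namespace FreeGroup.Blocks

open List

variable {ι : Type*}

def boolSign (s : Bool) : ℤ := if s then 1 else -1

def blockProd (B : List (ι × ℤ)) : FreeGroup ι := (B.map fun p => of p.1 ^ p.2).prod

def IsBlockForm (B : List (ι × ℤ)) : Prop :=
  (∀ p ∈ B, p.2 ≠ 0) ∧ B.IsChain fun p q => p.1 ≠ q.1

def blockSqSum (B : List (ι × ℤ)) : ℕ := (B.map fun p => p.2.natAbs ^ 2).sum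

def blockInv (B : List (ι × ℤ)) : List (ι × ℤ) := (B.map fun p => (p.1, -p.2)).reverse

def blockWord (B : List (ι × ℤ)) : List (ι × Bool) :=
  B.flatMap fun p => replicate p.2.natAbs (p.1, decide (0 < p.2))

@[simp] lemma blockProd_nil : blockProd ([] : List (ι × ℤ)) = 1 := rfl

@[simp] lemma blockProd_cons (a : ι) (k : ℤ) (B : List (ι × ℤ)) :
    blockProd ((a, k) :: B) = of a ^ k * blockProd B := rfl

@[simp] lemma blockProd_append (B B' : List (ι × ℤ)) :
    blockProd (B ++ B') = blockProd B * blockProd B' := by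
  simp [blockProd]

lemma blockProd_blockInv (B : List (ι × ℤ)) : blockProd (blockInv B) = (blockProd B)⁻¹ := by
  simp [blockProd, blockInv, prod_inv_reverse, Function.comp_def, zpow_neg]

@[simp] lemma blockSqSum_cons (a : ι) (k : ℤ) (B : List (ι × ℤ)) :
    blockSqSum ((a, k) :: B) = k.natAbs ^ 2 + blockSqSum B := rfl

@[simp] lemma blockSqSum_append (B B' : List (ι × ℤ)) :
    blockSqSum (B ++ B') = blockSqSum B + blockSqSum B' := by
  simp [blockSqSum]

@[simp] lemma blockSqSum_blockInv (B : List (ι × ℤ)) : blockSqSum (blockInv B) = blockSqSum B := by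
  simp [blockSqSum, blockInv, Function.comp_def, sum_reverse]

lemma isBlockForm_cons {p : ι × ℤ} {B : List (ι × ℤ)} :
    IsBlockForm (p :: B) ↔ p.2 ≠ 0 ∧ p.1 ∉ B.head?.map Prod.fst ∧ IsBlockForm B := by
  cases B with
  | nil => simp [IsBlockForm]
  | cons q B => simp [IsBlockForm, isChain_cons_cons]; tauto

lemma isBlockForm_append {B B' : List (ι × ℤ)} :
    IsBlockForm (B ++ B') ↔ IsBlockForm B ∧ IsBlockForm B' ∧
      ∀ p ∈ B.getLast?, ∀ q ∈ B'.head?, p.1 ≠ q.1 := by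
  simp only [IsBlockForm, forall_mem_append, isChain_append]
  tauto

lemma IsBlockForm.tail {p : ι × ℤ} {B : List (ι × ℤ)} (h : IsBlockForm (p :: B)) :
    IsBlockForm B :=
  (isBlockForm_cons.1 h).2.2

lemma IsBlockForm.blockInv {B : List (ι × ℤ)} (h : IsBlockForm B) :
    IsBlockForm (blockInv B) := by
  refine ⟨fun p hp => ?_, ?_⟩
  · obtain ⟨q, hq, rfl⟩ := mem_map.1 (mem_reverse.1 hp)
    simpa using h.1 q hq
  simpa [Blocks.blockInv, isChain_reverse, isChain_map, flip, ne_comm] using h.2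

lemma getLast?_blockInv (B : List (ι × ℤ)) :
    (blockInv B).getLast? = B.head?.map fun p => (p.1, -p.2) := by
  simp [blockInv, getLast?_reverse]

/-- `pre * blockProd R`, for `R ∈ markers B`, are the points where `blockVec pre B` can be nonzero:
`R = [(a₁, k₁), …, (a_{i-1}, k_{i-1}), (aᵢ, 1)]`. -/
def markers : List (ι × ℤ) → List (List (ι × ℤ))
  | [] => []
  | (a, k) :: B => [(a, 1)] :: (markers B).map ((a, k) :: ·)

lemma mem_markers_cons {a : ι} {k : ℤ} {B R : List (ι × ℤ)} :
    R ∈ markers ((a, k) :: B) ↔ R = [(a, 1)] ∨ ∃ R' ∈ markers B, (a, k) :: R' = R := by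
  simp [markers]

lemma ne_nil_of_mem_markers {B R : List (ι × ℤ)} (hR : R ∈ markers B) : R ≠ [] := by
  cases B with
  | nil => simp [markers] at hR
  | cons p B =>
    rcases mem_markers_cons.1 hR with rfl | ⟨_, -, rfl⟩ <;> simp

lemma map_fst_head?_of_mem_markers {B R : List (ι × ℤ)} (hR : R ∈ markers B) :
    R.head?.map Prod.fst = B.head?.map Prod.fst := by
  cases B with
  | nil => simp [markers] at hR
  | cons p B =>
    rcases mem_markers_cons.1 hR with rfl | ⟨_, -, rfl⟩ <;> rfl

lemma cons_mem_markers_cons {B R : List (ι × ℤ)} (hR : R ∈ markers B) (a : ι) (k : ℤ) :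
    (a, k) :: R ∈ markers ((a, k) :: B) :=
  mem_cons_of_mem _ (mem_map_of_mem hR)

lemma isBlockForm_of_mem_markers {B R : List (ι × ℤ)} (hB : IsBlockForm B) (hR : R ∈ markers B) :
    IsBlockForm R := by
  induction B generalizing R with
  | nil => simp [markers] at hR
  | cons p B ih =>
    obtain ⟨hk, hhead, hB'⟩ := isBlockForm_cons.1 hB
    rcases mem_markers_cons.1 hR with rfl | ⟨R', hR', rfl⟩
    · simp [IsBlockForm]
    · rw [← map_fst_head?_of_mem_markers hR'] at hhead
      exact isBlockForm_cons.2 ⟨hk, hhead, ih hB' hR'⟩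

lemma mk_cons (a : ι) (s : Bool) (w : List (ι × Bool)) :
    mk ((a, s) :: w) = of a ^ boolSign s * mk w := by
  rw [← singleton_append, ← mul_mk]
  cases s
  · simp [boolSign, of, inv_mk, invRev]
  · simp [boolSign, of]

lemma mk_replicate (a : ι) (s : Bool) (n : ℕ) :
    mk (replicate n (a, s)) = of a ^ (n * boolSign s) := by
  induction n with
  | zero => simp [one_eq_mk]
  | succ n ih => rw [replicate_succ, mk_cons, ih, ← zpow_add]; push_cast; ring_nf

lemma natAbs_mul_boolSign (k : ℤ) : k.natAbs * boolSign (decide (0 < k)) = k := by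
  rcases lt_trichotomy k 0 with h | rfl | h
  · simp [boolSign, h.not_gt, abs_of_neg h]
  · rfl
  · simp [boolSign, h, abs_of_pos h]

lemma boolSign_mul_self (s : Bool) : boolSign s * boolSign s = 1 := by
  cases s <;> rfl

lemma natAbs_boolSign (s : Bool) : (boolSign s).natAbs = 1 := by
  cases s <;> rfl

lemma blockProd_eq_mk_blockWord (B : List (ι × ℤ)) : blockProd B = mk (blockWord B) := by
  induction B with
  | nil => rfl
  | cons p B ih =>
    rw [blockWord, flatMap_cons, ← mul_mk, mk_replicate, natAbs_mul_boolSign, ← blockWord, ← ih]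
    rfl

lemma blockWord_cons_of_ne_zero {a : ι} {k : ℤ} (hk : k ≠ 0) (B : List (ι × ℤ)) :
    blockWord ((a, k) :: B) =
      (a, decide (0 < k)) :: (replicate (k.natAbs - 1) (a, decide (0 < k)) ++ blockWord B) := by
  obtain ⟨n, hn⟩ := Nat.exists_eq_add_one_of_ne_zero (Int.natAbs_ne_zero.2 hk)
  simp [blockWord, hn, replicate_succ]

lemma map_fst_head?_blockWord {B : List (ι × ℤ)} (hB : IsBlockForm B) :
    (blockWord B).head?.map Prod.fst = B.head?.map Prod.fst := by
  cases B with
  | nil => rfl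
  | cons p B => rw [blockWord_cons_of_ne_zero (isBlockForm_cons.1 hB).1]; rfl

lemma isReduced_blockWord {B : List (ι × ℤ)} (hB : IsBlockForm B) : IsReduced (blockWord B) := by
  induction B with
  | nil => exact IsReduced.nil
  | cons p B ih =>
    obtain ⟨-, hhead, hB'⟩ := isBlockForm_cons.1 hB
    change IsReduced (replicate p.2.natAbs (p.1, decide (0 < p.2)) ++ blockWord B)
    refine isChain_append.2 ⟨isChain_replicate_of_rel _ fun _ => rfl, ih hB', ?_⟩
    intro x hx y hy hxy
    obtain rfl := eq_of_mem_replicate (mem_of_mem_getLast? hx)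
    rw [← map_fst_head?_blockWord hB'] at hhead
    exact absurd (hxy ▸ Option.mem_map_of_mem Prod.fst hy) hhead

variable [DecidableEq ι]

lemma toWord_blockProd {B : List (ι × ℤ)} (hB : IsBlockForm B) :
    (blockProd B).toWord = blockWord B := by
  rw [blockProd_eq_mk_blockWord, toWord_mk, (isReduced_blockWord hB).reduce_eq]

/-- The block decomposition of a word, by the same recursion as `TAux` and `blockSqSumAux`:
`a ^ k` is the block being read. -/
def toBlocksAux (a : ι) (k : ℤ) : List (ι × Bool) → List (ι × ℤ)
  | [] => [(a, k)]
  | (b, s) :: l =>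
    if b = a then toBlocksAux a (k + boolSign s) l else (a, k) :: toBlocksAux b (boolSign s) l

def toBlocks : List (ι × Bool) → List (ι × ℤ)
  | [] => []
  | (a, s) :: l => toBlocksAux a (boolSign s) l

lemma toBlocksAux_replicate_append (a : ι) (s : Bool) (n : ℕ) (k : ℤ) (l : List (ι × Bool)) :
    toBlocksAux a k (replicate n (a, s) ++ l) = toBlocksAux a (k + n * boolSign s) l := by
  induction n generalizing k with
  | zero => simp
  | succ n ih =>
    rw [replicate_succ, cons_append, toBlocksAux, if_pos rfl, ih]
    push_cast
    ring_nf

lemma toBlocksAux_of_not_mem {a : ι} {w : List (ι × Bool)} (h : a ∉ w.head?.map Prod.fst)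
    (k : ℤ) : toBlocksAux a k w = (a, k) :: toBlocks w := by
  cases w with
  | nil => rfl
  | cons x w => simp_all [toBlocksAux, toBlocks, eq_comm]

lemma toBlocks_blockWord {B : List (ι × ℤ)} (hB : IsBlockForm B) : toBlocks (blockWord B) = B := by
  induction B with
  | nil => rfl
  | cons p B ih =>
    obtain ⟨a, k⟩ := p
    obtain ⟨hk, hhead, hB'⟩ := isBlockForm_cons.1 hB
    rw [← map_fst_head?_blockWord hB'] at hhead
    have hexp : boolSign (decide (0 < k)) + ↑(k.natAbs - 1) * boolSign (decide (0 < k)) = k := by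
      have := natAbs_mul_boolSign k
      push_cast [Nat.one_le_iff_ne_zero.2 (Int.natAbs_ne_zero.2 hk)] at this ⊢
      linear_combination this
    rw [blockWord_cons_of_ne_zero hk, toBlocks, toBlocksAux_replicate_append, hexp,
      toBlocksAux_of_not_mem hhead, ih hB']

lemma blockProd_inj {B B' : List (ι × ℤ)} (hB : IsBlockForm B) (hB' : IsBlockForm B') :
    blockProd B = blockProd B' ↔ B = B' := by
  refine ⟨fun h => ?_, congrArg blockProd⟩
  rw [← toBlocks_blockWord hB, ← toBlocks_blockWord hB', ← toWord_blockProd hB,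
    ← toWord_blockProd hB', h]

lemma blockProd_toBlocksAux (a : ι) (k : ℤ) (l : List (ι × Bool)) :
    blockProd (toBlocksAux a k l) = of a ^ k * mk l := by
  induction l generalizing a k with
  | nil => simp [toBlocksAux, one_eq_mk]
  | cons x l ih =>
    obtain ⟨b, s⟩ := x
    rw [mk_cons, toBlocksAux]
    split_ifs with hba
    · rw [ih, hba, zpow_add, mul_assoc]
    · rw [blockProd_cons, ih]

lemma blockProd_toBlocks (w : List (ι × Bool)) : blockProd (toBlocks w) = mk w := by
  cases w with
  | nil => rfl
  | cons x l => rw [toBlocks, blockProd_toBlocksAux, mk_cons]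

lemma isBlockForm_toBlocksAux {a : ι} {s : Bool} {l : List (ι × Bool)}
    (hl : IsReduced ((a, s) :: l)) {k : ℤ} (hk : 0 < k * boolSign s) :
    IsBlockForm (toBlocksAux a k l) ∧ (toBlocksAux a k l).head?.map Prod.fst = some a := by
  induction l generalizing a s k with
  | nil => simp [toBlocksAux, IsBlockForm, left_ne_zero_of_mul hk.ne']
  | cons x l ih =>
    obtain ⟨b, t⟩ := x
    obtain ⟨hst, hl'⟩ := isReduced_cons_cons.1 hl
    rw [toBlocksAux]
    split_ifs with hba
    · obtain rfl : s = t := hst hba.symm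
      exact ih (hba ▸ hl') (by rw [add_mul, boolSign_mul_self]; omega)
    · obtain ⟨hV, hhd⟩ := ih hl' (k := boolSign t) (by rw [boolSign_mul_self]; exact one_pos)
      refine ⟨isBlockForm_cons.2 ⟨left_ne_zero_of_mul hk.ne', ?_, hV⟩, rfl⟩
      rw [hhd, Option.mem_some_iff]
      exact hba

lemma isBlockForm_toBlocks {w : List (ι × Bool)} (hw : IsReduced w) : IsBlockForm (toBlocks w) := by
  cases w with
  | nil => simp [toBlocks, IsBlockForm]
  | cons x l =>
    exact (isBlockForm_toBlocksAux hw (by rw [boolSign_mul_self]; exact one_pos)).1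

lemma blockSqSumAux_eq_blockSqSum_toBlocksAux {a : ι} {s : Bool} {l : List (ι × Bool)}
    (hl : IsReduced ((a, s) :: l)) (n : ℕ) :
    blockSqSumAux a n l = blockSqSum (toBlocksAux a (n * boolSign s) l) := by
  induction l generalizing a s n with
  | nil => simp [blockSqSumAux, toBlocksAux, blockSqSum, Int.natAbs_mul, natAbs_boolSign]
  | cons x l ih =>
    obtain ⟨b, t⟩ := x
    obtain ⟨hst, hl'⟩ := isReduced_cons_cons.1 hl
    rw [blockSqSumAux, toBlocksAux]
    split_ifs with hba
    · obtain rfl : s = t := hst hba.symm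
      rw [ih (hba ▸ hl')]
      push_cast
      ring_nf
    · rw [ih hl', blockSqSum_cons, Int.natAbs_mul, natAbs_boolSign, mul_one, Int.natAbs_natCast,
        Nat.cast_one, one_mul]

lemma l2sq_eq_blockSqSum_toBlocks (g : FreeGroup ι) :
    l2sq g = blockSqSum (toBlocks g.toWord) := by
  have hg : IsReduced g.toWord := isReduced_toWord
  unfold l2sq
  split <;> rename_i hw
  · simp [hw, toBlocks, blockSqSum]
  · rw [hw] at hg
    simp [hw, toBlocks, blockSqSumAux_eq_blockSqSum_toBlocksAux hg 1]

lemma l2sq_blockProd {B : List (ι × ℤ)} (hB : IsBlockForm B) :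
    l2sq (blockProd B) = blockSqSum B := by
  rw [l2sq_eq_blockSqSum_toBlocks, toWord_blockProd hB, toBlocks_blockWord hB]

lemma l2sq_inv_mul_of_fst_ne {a b : ι} {j k : ℤ} {F G : List (ι × ℤ)}
    (hF : IsBlockForm ((a, j) :: F)) (hG : IsBlockForm ((b, k) :: G)) (hab : a ≠ b) :
    l2sq ((blockProd ((a, j) :: F))⁻¹ * blockProd ((b, k) :: G)) =
      blockSqSum ((a, j) :: F) + blockSqSum ((b, k) :: G) := by
  have hv : IsBlockForm (blockInv ((a, j) :: F) ++ (b, k) :: G) :=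
    isBlockForm_append.2 ⟨hF.blockInv, hG, by simp [getLast?_blockInv, hab]⟩
  rw [← blockProd_blockInv, ← blockProd_append, l2sq_blockProd hv, blockSqSum_append,
    blockSqSum_blockInv]

lemma l2sq_inv_mul_of_snd_ne {a : ι} {j k : ℤ} {F G : List (ι × ℤ)}
    (hF : IsBlockForm ((a, j) :: F)) (hG : IsBlockForm ((a, k) :: G)) (hjk : j ≠ k) :
    l2sq ((blockProd ((a, j) :: F))⁻¹ * blockProd ((a, k) :: G)) =
      blockSqSum F + (k - j).natAbs ^ 2 + blockSqSum G := by
  obtain ⟨-, hFa, hF'⟩ := isBlockForm_cons.1 hF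
  obtain ⟨-, hGa, hG'⟩ := isBlockForm_cons.1 hG
  have hv : IsBlockForm (blockInv F ++ (a, k - j) :: G) := by
    refine isBlockForm_append.2
      ⟨hF'.blockInv, isBlockForm_cons.2 ⟨sub_ne_zero.2 hjk.symm, hGa, hG'⟩, ?_⟩
    cases F <;> simp_all [getLast?_blockInv, eq_comm]
  have hprod : (blockProd ((a, j) :: F))⁻¹ * blockProd ((a, k) :: G) =
      blockProd (blockInv F ++ (a, k - j) :: G) := by
    simp only [blockProd_append, blockProd_blockInv, blockProd_cons, zpow_sub]
    group
  rw [hprod, l2sq_blockProd hv, blockSqSum_append, blockSqSum_blockInv, blockSqSum_cons]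
  ring

/-- `T` read off a block list, with every point left-translated by `pre`. -/
noncomputable def blockVec (pre : FreeGroup ι) : List (ι × ℤ) → lp (fun _ : FreeGroup ι => ℝ) 2
  | [] => 0
  | (a, k) :: B => (k : ℝ) • lp.single 2 (pre * of a) 1 + blockVec (pre * of a ^ k) B

lemma TAux_eq_blockVec_toBlocksAux (pre : FreeGroup ι) (a : ι) (k : ℤ) (l : List (ι × Bool)) :
    TAux pre a k l = blockVec pre (toBlocksAux a k l) := by
  induction l generalizing pre a k with
  | nil => simp [TAux, toBlocksAux, blockVec]
  | cons x l ih =>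
    obtain ⟨b, s⟩ := x
    by_cases hba : b = a
    · rw [TAux, toBlocksAux, if_pos hba, if_pos hba]
      exact ih ..
    · rw [TAux, toBlocksAux, if_neg hba, if_neg hba, ih]
      rfl

lemma T_eq_blockVec_toBlocks (g : FreeGroup ι) : T g = blockVec 1 (toBlocks g.toWord) := by
  unfold T
  split <;> rename_i hw
  · simp [hw, toBlocks, blockVec]
  · simp [hw, toBlocks, TAux_eq_blockVec_toBlocksAux, boolSign]

lemma blockVec_cons (pre : FreeGroup ι) (a : ι) (k : ℤ) (B : List (ι × ℤ)) :
    blockVec pre ((a, k) :: B) = blockVec pre [(a, k)] + blockVec (pre * of a ^ k) B := by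
  simp [blockVec]

lemma norm_blockVec_singleton (pre : FreeGroup ι) (a : ι) (k : ℤ) :
    ‖blockVec pre [(a, k)]‖ = |(k : ℝ)| := by
  simp [blockVec, norm_smul, lp.norm_single]

lemma blockVec_apply_eq_zero {pre x : FreeGroup ι} {B : List (ι × ℤ)}
    (hx : ∀ R ∈ markers B, x ≠ pre * blockProd R) : blockVec pre B x = 0 := by
  induction B generalizing pre with
  | nil => rfl
  | cons p B ih =>
    obtain ⟨a, k⟩ := p
    simp only [markers, forall_mem_cons, forall_mem_map, blockProd_cons, blockProd_nil, zpow_one,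
      mul_one] at hx
    rw [blockVec, lp.coeFn_add, Pi.add_apply, lp.coeFn_smul, Pi.smul_apply,
      lp.single_apply_ne _ _ _ hx.1, smul_zero, zero_add, ih]
    simpa [mul_assoc] using hx.2

lemma inner_blockVec_eq_zero {x y : FreeGroup ι} {B B' : List (ι × ℤ)}
    (h : ∀ R ∈ markers B, ∀ R' ∈ markers B', x * blockProd R ≠ y * blockProd R') :
    inner ℝ (blockVec x B) (blockVec y B') = 0 := by
  rw [lp.inner_eq_tsum]
  refine (tsum_congr fun z => ?_).trans tsum_zero
  by_cases hz : ∃ R ∈ markers B, z = x * blockProd R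
  · obtain ⟨R, hR, rfl⟩ := hz
    rw [blockVec_apply_eq_zero (h R hR), inner_zero_right]
  · push Not at hz
    rw [blockVec_apply_eq_zero hz, inner_zero_left]

lemma mul_blockProd_ne {R R' : List (ι × ℤ)} (hR : IsBlockForm R) (hR' : IsBlockForm R')
    (h : R ≠ R') (x : FreeGroup ι) : x * blockProd R ≠ x * blockProd R' :=
  fun e => h ((blockProd_inj hR hR').1 (mul_left_cancel e))

lemma inner_blockVec_singleton_eq_zero {a : ι} {k : ℤ} {B : List (ι × ℤ)}
    (hB : IsBlockForm ((a, k) :: B)) (m : ℤ) (pre : FreeGroup ι) :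
    inner ℝ (blockVec pre [(a, m)]) (blockVec (pre * of a ^ k) B) = 0 := by
  refine inner_blockVec_eq_zero fun R hR R' hR' => ?_
  obtain rfl : R = [(a, 1)] := by simpa [markers] using hR
  rw [mul_assoc, ← blockProd_cons]
  refine mul_blockProd_ne (isBlockForm_of_mem_markers hB (mem_cons_self ..))
    (isBlockForm_of_mem_markers hB (cons_mem_markers_cons hR' a k)) ?_ pre
  exact fun h => ne_nil_of_mem_markers hR' (cons_eq_cons.1 h).2.symm

lemma norm_blockVec_sq {B : List (ι × ℤ)} (hB : IsBlockForm B) (pre : FreeGroup ι) :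
    ‖blockVec pre B‖ ^ 2 = blockSqSum B := by
  induction B generalizing pre with
  | nil => simp [blockVec, blockSqSum]
  | cons p B ih =>
    obtain ⟨a, k⟩ := p
    rw [blockVec_cons, norm_add_sq_real, inner_blockVec_singleton_eq_zero hB, mul_zero, add_zero,
      ih hB.tail, norm_blockVec_singleton, blockSqSum_cons]
    push_cast [Nat.cast_natAbs, sq_abs]
    rfl

lemma norm_blockVec_sub_sq_of_fst_ne {a b : ι} {j k : ℤ} {F G : List (ι × ℤ)}
    (hF : IsBlockForm ((a, j) :: F)) (hG : IsBlockForm ((b, k) :: G)) (hab : a ≠ b)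
    (pre : FreeGroup ι) :
    ‖blockVec pre ((b, k) :: G) - blockVec pre ((a, j) :: F)‖ ^ 2 =
      (blockSqSum ((a, j) :: F) + blockSqSum ((b, k) :: G) : ℕ) := by
  have horth : inner ℝ (blockVec pre ((b, k) :: G)) (blockVec pre ((a, j) :: F)) = 0 := by
    refine inner_blockVec_eq_zero fun R hR R' hR' => mul_blockProd_ne
      (isBlockForm_of_mem_markers hG hR) (isBlockForm_of_mem_markers hF hR') ?_ pre
    rintro rfl
    have := (map_fst_head?_of_mem_markers hR).symm.trans (map_fst_head?_of_mem_markers hR')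
    exact hab (Option.some_injective _ this).symm
  rw [norm_sub_sq_real, horth, mul_zero, sub_zero, norm_blockVec_sq hG, norm_blockVec_sq hF]
  push_cast
  ring

lemma norm_blockVec_sub_sq_of_snd_ne {a : ι} {j k : ℤ} {F G : List (ι × ℤ)}
    (hF : IsBlockForm ((a, j) :: F)) (hG : IsBlockForm ((a, k) :: G)) (hjk : j ≠ k)
    (pre : FreeGroup ι) :
    ‖blockVec pre ((a, k) :: G) - blockVec pre ((a, j) :: F)‖ ^ 2 =
      (blockSqSum F + (k - j).natAbs ^ 2 + blockSqSum G : ℕ) := by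
  set u := blockVec pre [(a, k - j)]
  set v := blockVec (pre * of a ^ k) G
  set w := blockVec (pre * of a ^ j) F
  have hsplit : blockVec pre ((a, k) :: G) - blockVec pre ((a, j) :: F) = u + (v - w) := by
    rw [blockVec_cons, blockVec_cons]
    simp only [u, blockVec, Int.cast_sub, sub_smul]
    abel
  have hvw : inner ℝ v w = 0 := by
    refine inner_blockVec_eq_zero fun R hR R' hR' => ?_
    rw [mul_assoc, mul_assoc, ← blockProd_cons, ← blockProd_cons]
    refine mul_blockProd_ne (isBlockForm_of_mem_markers hG (cons_mem_markers_cons hR a k))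
      (isBlockForm_of_mem_markers hF (cons_mem_markers_cons hR' a j)) ?_ pre
    exact fun h => hjk (Prod.ext_iff.1 (cons_eq_cons.1 h).1).2.symm
  have hu : inner ℝ u (v - w) = 0 := by
    rw [inner_sub_right, inner_blockVec_singleton_eq_zero hG, inner_blockVec_singleton_eq_zero hF,
      sub_zero]
  rw [hsplit, norm_add_sq_real, hu, norm_sub_sq_real, hvw, norm_blockVec_singleton,
    norm_blockVec_sq hG.tail, norm_blockVec_sq hF.tail]
  push_cast [Nat.cast_natAbs, sq_abs]
  ring

theorem norm_blockVec_sub_sq {F G : List (ι × ℤ)} (hF : IsBlockForm F) (hG : IsBlockForm G)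
    (pre : FreeGroup ι) :
    ‖blockVec pre G - blockVec pre F‖ ^ 2 = l2sq ((blockProd F)⁻¹ * blockProd G) := by
  induction F generalizing G pre with
  | nil =>
    rw [blockVec, sub_zero, norm_blockVec_sq hG, blockProd_nil, inv_one, one_mul,
      l2sq_blockProd hG]
  | cons p F ih =>
    obtain ⟨a, j⟩ := p
    cases G with
    | nil =>
      rw [blockVec, zero_sub, norm_neg, norm_blockVec_sq hF, blockProd_nil, mul_one,
        ← blockProd_blockInv, l2sq_blockProd hF.blockInv, blockSqSum_blockInv]
    | cons q G =>
      obtain ⟨b, k⟩ := q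
      by_cases hab : a = b
      · subst hab
        by_cases hjk : j = k
        · subst hjk
          rw [blockVec_cons, blockVec_cons pre a j F, add_sub_add_left_eq_sub, ih hF.tail hG.tail,
            blockProd_cons, blockProd_cons, mul_inv_rev, mul_assoc, inv_mul_cancel_left]
        · rw [norm_blockVec_sub_sq_of_snd_ne hF hG hjk, l2sq_inv_mul_of_snd_ne hF hG hjk]
      · rw [norm_blockVec_sub_sq_of_fst_ne hF hG hab, l2sq_inv_mul_of_fst_ne hF hG hab]

lemma exists_isBlockForm_blockProd_eq_T_eq (g : FreeGroup ι) :
    ∃ B, IsBlockForm B ∧ blockProd B = g ∧ T g = blockVec 1 B :=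
  ⟨toBlocks g.toWord, isBlockForm_toBlocks isReduced_toWord,
    by rw [blockProd_toBlocks, mk_toWord], T_eq_blockVec_toBlocks g⟩

end FreeGroup.Blocks

theorem norm_T_sub_T_sq_general
    {ι : Type*} [DecidableEq ι]
    (f g : FreeGroup ι) :
    ‖T g - T f‖ ^ 2 = (l2sq (f⁻¹ * g) : ℝ) := by
  obtain ⟨F, hF, rfl, hTf⟩ := FreeGroup.Blocks.exists_isBlockForm_blockProd_eq_T_eq f
  obtain ⟨G, hG, rfl, hTg⟩ := FreeGroup.Blocks.exists_isBlockForm_blockProd_eq_T_eq g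
  rw [hTf, hTg, FreeGroup.Blocks.norm_blockVec_sub_sq hF hG]

/-- For all `f, g ∈ F_r`, `‖T(g) − T(f)‖² = ‖f⁻¹ g‖₂²`. -/
theorem norm_T_sub_T_sq
    {ι : Type*} [DecidableEq ι] [Countable ι] [Nonempty ι]
    (f g : FreeGroup ι) :
    ‖T g - T f‖ ^ 2 = (l2sq (f⁻¹ * g) : ℝ) :=
  norm_T_sub_T_sq_general f g
end

section
/- The squared ℓ² length function ‖·‖₂² : F_∞ → ℕ is a morphism on an arbitrarily large subset of F_∞: for every N ∈ ℕ and M ∈ ℕ and every choice of natural numbers s₁, …, s_M, there exist elements g_{n,k} ∈ F_∞ (for 1 ≤ n ≤ N and 1 ≤ k ≤ M) such that ‖g_{n,j}⁻¹ g_{m,k}‖₂² = s_j + s_k whenever n ≠ m. -/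
open ComplexOrder

/-!
Take `g_{n,k}` to be a product of `s_k` generators, all distinct, and with disjoint sets of
generators for distinct `n`. For `n ≠ m` the word of `g_{n,j}⁻¹ g_{m,k}` then uses `s_j + s_k`
pairwise distinct generators, each to the power `±1`, so it is reduced and all its blocks have
length one: its squared ℓ² length is its word length `s_j + s_k`.
-/

open FreeGroup

theorem isReduced_of_isChain_fst_ne {ι : Type*} {L : List (ι × Bool)}
    (h : L.IsChain fun x y => x.1 ≠ y.1) : IsReduced L :=
  h.imp fun _ _ hne heq => absurd heq hne

section DistinctGenerators

variable {ι : Type*} [DecidableEq ι]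

theorem blockSqSumAux_of_isChain_fst_ne :
    ∀ (a : ι) (x : Bool) (n : ℕ) (L : List (ι × Bool)),
      ((a, x) :: L).IsChain (fun y z => y.1 ≠ z.1) → blockSqSumAux a n L = n ^ 2 + L.length
  | _, _, n, [], _ => by simp [blockSqSumAux]
  | a, _, n, (b, y) :: l, h => by
    obtain ⟨hab, h⟩ := List.isChain_cons_cons.1 h
    rw [blockSqSumAux, if_neg (Ne.symm hab), blockSqSumAux_of_isChain_fst_ne b y 1 l h,
      List.length_cons]
    ring

theorem l2sq_mk_of_isChain_fst_ne {L : List (ι × Bool)}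
    (h : L.IsChain fun x y => x.1 ≠ y.1) : l2sq (mk L) = L.length := by
  have hword : (mk L).toWord = L := by
    rw [toWord_mk, (isReduced_of_isChain_fst_ne h).reduce_eq]
  rcases L with _ | ⟨⟨a, x⟩, l⟩
  · simp [l2sq, hword]
  · simp only [l2sq, hword, blockSqSumAux_of_isChain_fst_ne a x 1 l h, List.length_cons]
    ring

theorem l2sq_mk_of_nodup_fst {L : List (ι × Bool)} (h : (L.map Prod.fst).Nodup) :
    l2sq (mk L) = L.length :=
  l2sq_mk_of_isChain_fst_ne ((List.isChain_map Prod.fst).1 h.isChain)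

end DistinctGenerators

theorem map_fst_invRev {α : Type*} (L : List (α × Bool)) :
    (invRev L).map Prod.fst = (L.map Prod.fst).reverse := by
  simp [invRev, List.map_reverse, Function.comp_def]

def rowWord (n t : ℕ) : List (ℕ × Bool) :=
  (List.range t).map fun i => (Nat.pair n i, true)

theorem map_fst_rowWord (n t : ℕ) :
    (rowWord n t).map Prod.fst = (List.range t).map (Nat.pair n) := by
  simp [rowWord, Function.comp_def]

theorem nodup_map_fst_rowWord (n t : ℕ) : ((rowWord n t).map Prod.fst).Nodup := by
  rw [map_fst_rowWord]
  exact List.nodup_range.map fun _ _ hi => (Nat.pair_eq_pair.1 hi).2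

theorem nodup_map_fst_invRev_rowWord_append {n m : ℕ} (hnm : n ≠ m) (t u : ℕ) :
    ((invRev (rowWord n t) ++ rowWord m u).map Prod.fst).Nodup := by
  rw [List.map_append, map_fst_invRev]
  refine List.Nodup.append (List.nodup_reverse.2 (nodup_map_fst_rowWord n t))
    (nodup_map_fst_rowWord m u) ?_
  intro x hx hx'
  rw [List.mem_reverse, map_fst_rowWord, List.mem_map] at hx
  rw [map_fst_rowWord, List.mem_map] at hx'
  obtain ⟨i, -, rfl⟩ := hx
  obtain ⟨i', -, hi'⟩ := hx'
  exact hnm (Nat.pair_eq_pair.1 hi').1.symm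

/-- The squared ℓ² length function `‖·‖₂² : F_∞ → ℕ` on the free group on countably
infinitely many generators is a morphism on an arbitrarily large subset of `F_∞`:
for every `N, M ∈ ℕ` and natural numbers `s₁, …, s_M`, there are elements
`g_{n,k} ∈ F_∞` (`1 ≤ n ≤ N`, `1 ≤ k ≤ M`) with `‖g_{n,j}⁻¹ g_{m,k}‖₂² = s_j + s_k`
whenever `n ≠ m`. -/
theorem l2sq_morphism_on_arbitrarily_large_subset :
    ∀ (N M : ℕ) (s : Fin M → ℕ),
      ∃ g : Fin N → Fin M → FreeGroup ℕ,
        ∀ (n m : Fin N) (j k : Fin M),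
          n ≠ m → l2sq ((g n j)⁻¹ * g m k) = s j + s k := by
  intro N M s
  refine ⟨fun n k => mk (rowWord n (s k)), fun n m j k hnm => ?_⟩
  rw [inv_mk, mul_mk,
    l2sq_mk_of_nodup_fst (nodup_map_fst_invRev_rowWord_append (Fin.val_ne_of_ne hnm) _ _)]
  simp [rowWord, invRev_length]
end

section
/- Let G be a group, S an additive commutative semigroup, and θ : G → S a surjective function that is a morphism on an arbitrarily large subset of G. Let φ : G → ℝ be positive definite and radial with respect to θ, i.e., φ = φ̇ ∘ θ for some function φ̇ : S → ℝ. Then φ̇ is positive definite on the semigroup S (for all n, s₁,…,s_n ∈ S and c₁,…,c_n ∈ ℂ, ∑_{j,k} c_j \overline{c_k} φ̇(s_j + s_k) ≥ 0) and bounded, with φ̇(s) ≤ φ(e) for every s ∈ S. -/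
/-!
Choose `N` blocks `g m j` on which `θ` is a morphism and apply positive definiteness of `φ` to
all `N * M` points with coefficient `c j` at `g m j`. Each of the `N * (N - 1)` off-diagonal
block pairs contributes exactly the semigroup sum `T = ∑ c j * conj (c k) * φ̇ (s j + s k)`,
while the `N` diagonal blocks contribute at most `(∑ ‖c j‖)² φ(e)` each, since `|φ| ≤ φ(e)`.
Dividing by `N` gives `0 ≤ (N - 1) T + O(1)`, and letting `N → ∞` gives `0 ≤ T`.
-/

open ComplexOrder

/-- `θ : G → S` is a morphism on an arbitrarily large subset of `G`. -/
def IsMorphismOnArbLargeSubset {G S : Type*} [Group G] [AddCommSemigroup S]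
    (θ : G → S) : Prop :=
  ∀ (N M : ℕ) (s : Fin M → S),
    ∃ g : Fin N → Fin M → G,
      ∀ (n m : Fin N) (j k : Fin M), n ≠ m → θ ((g n j)⁻¹ * g m k) = s j + s k

/-- A real-valued function on an additive commutative semigroup is positive definite
in the semigroup sense. -/
def IsPosDefSemigroup {S : Type*} [AddCommSemigroup S] (φ : S → ℝ) : Prop :=
  ∀ (n : ℕ) (s : Fin n → S) (c : Fin n → ℂ),
    0 ≤ ∑ j, ∑ k, c j * (starRingEnd ℂ) (c k) * (φ (s j + s k) : ℂ)

open Filter Topology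

namespace Complex

theorem nonneg_of_forall_nonneg_nsmul_add {T : ℂ} {C : ℝ}
    (h : ∀ n : ℕ, ∃ D : ℂ, ‖D‖ ≤ C ∧ 0 ≤ n • T + D) : 0 ≤ T := by
  choose D hDC hD using h
  have hlim : Tendsto (fun n : ℕ => (n : ℝ)⁻¹ • (n • T + D n)) atTop (𝓝 T) := by
    have hD0 : Tendsto (fun n : ℕ => (n : ℝ)⁻¹ • D n) atTop (𝓝 0) :=
      squeeze_zero_norm (fun n => by
        rw [norm_smul, norm_inv, Real.norm_natCast, inv_mul_eq_div]
        exact div_le_div_of_nonneg_right (hDC n) n.cast_nonneg)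
        (tendsto_const_div_atTop_nhds_zero_nat C)
    refine (add_zero T ▸ tendsto_const_nhds.add hD0).congr' ?_
    filter_upwards [eventually_ne_atTop 0] with n hn
    rw [smul_add, ← Nat.cast_smul_eq_nsmul ℝ, smul_smul, inv_mul_cancel₀ (by exact_mod_cast hn),
      one_smul]
  exact ge_of_tendsto' hlim fun n => smul_nonneg (by positivity) (hD n)

end Complex

section KernelSum

variable {G ι : Type*} [Group G] [Fintype ι]

def kernelSum (φ : G → ℝ) (x y : ι → G) (c : ι → ℂ) : ℂ :=
  ∑ j, ∑ k, c j * (starRingEnd ℂ) (c k) * (φ ((x j)⁻¹ * y k) : ℂ)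

theorem kernelSum_uncurry {κ : Type*} [Fintype κ] (φ : G → ℝ) (x : κ → ι → G) (c : ι → ℂ) :
    kernelSum φ (Function.uncurry x) (Function.uncurry x) (c ∘ Prod.snd) =
      ∑ m, ∑ m', kernelSum φ (x m) (x m') c := by
  simp only [kernelSum, Fintype.sum_prod_type, Function.uncurry_apply_pair, Function.comp_apply]
  exact Finset.sum_congr rfl fun m _ => Finset.sum_comm

end KernelSum

theorem Fintype.sum_eq_add_nsmul_of_ne {ι M : Type*} [Fintype ι] [DecidableEq ι]
    [AddCommMonoid M] {f : ι → M} {i : ι} {a : M} (h : ∀ j, j ≠ i → f j = a) :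
    ∑ j, f j = f i + (Fintype.card ι - 1) • a := by
  rw [Fintype.sum_eq_add_sum_compl i, Finset.sum_congr rfl fun j hj => h j (by simpa using hj),
    Finset.sum_const, Finset.card_compl, Finset.card_singleton]

namespace IsPositiveDefinite

variable {G : Type*} [Group G] {φ : G → ℝ}

theorem kernelSum_nonneg (hφ : IsPositiveDefinite φ) {ι : Type*} [Fintype ι] (x : ι → G)
    (c : ι → ℂ) : 0 ≤ kernelSum φ x x c := by
  let e := Fintype.equivFin ι
  convert hφ _ (x ∘ e.symm) (c ∘ e.symm) using 1
  refine Fintype.sum_equiv e _ _ fun j => Fintype.sum_equiv e _ _ fun k => ?_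
  simp

theorem apply_inv (hφ : IsPositiveDefinite φ) (g : G) : φ g⁻¹ = φ g := by
  have := hφ 2 ![1, g] ![1, Complex.I]
  simp only [Fin.sum_univ_two, Fin.isValue, Matrix.cons_val_zero, map_one, mul_one,
    Matrix.cons_val_one, Matrix.cons_val_fin_one, Complex.conj_I, mul_neg, neg_mul, inv_one,
    one_mul, Complex.I_mul_I, inv_mul_cancel, neg_neg, Complex.le_def, Complex.zero_re,
    Complex.add_re, Complex.ofReal_re, Complex.neg_re, Complex.mul_re, Complex.I_re, zero_mul,
    Complex.I_im, Complex.ofReal_im, mul_zero, sub_self, neg_zero, add_zero, zero_add,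
    nonneg_add_self_iff, Complex.zero_im, Complex.add_im, Complex.neg_im, Complex.mul_im] at this
  linarith

theorem abs_le (hφ : IsPositiveDefinite φ) (g : G) : |φ g| ≤ φ 1 := by
  have h₁ := hφ 2 ![1, g] ![1, 1]
  have h₂ := hφ 2 ![1, g] ![1, -1]
  simp only [Fin.sum_univ_two, Fin.isValue, Matrix.cons_val_zero, map_one, mul_one,
    hφ.apply_inv, Matrix.cons_val_one, Matrix.cons_val_fin_one, one_mul, inv_one, inv_mul_cancel,
    Complex.le_def, Complex.zero_re, Complex.add_re, Complex.ofReal_re, Complex.zero_im,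
    Complex.add_im, Complex.ofReal_im, add_zero, and_true, map_neg, mul_neg, neg_mul, neg_neg,
    Complex.neg_re, Complex.neg_im, neg_zero] at h₁ h₂
  exact _root_.abs_le.2 ⟨by linarith, by linarith⟩

theorem norm_kernelSum_le (hφ : IsPositiveDefinite φ) {ι : Type*} [Fintype ι] (x y : ι → G)
    (c : ι → ℂ) : ‖kernelSum φ x y c‖ ≤ (∑ j, ‖c j‖) ^ 2 * φ 1 :=
  calc ‖kernelSum φ x y c‖
      ≤ ∑ j, ∑ k, ‖c j * (starRingEnd ℂ) (c k) * (φ ((x j)⁻¹ * y k) : ℂ)‖ :=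
        (norm_sum_le _ _).trans (Finset.sum_le_sum fun j _ => norm_sum_le _ _)
    _ ≤ ∑ j, ∑ k, ‖c j‖ * ‖c k‖ * φ 1 := by
        gcongr with j _ k _
        rw [norm_mul, norm_mul, Complex.norm_conj, Complex.norm_real, Real.norm_eq_abs]
        gcongr
        exact hφ.abs_le _
    _ = (∑ j, ‖c j‖) ^ 2 * φ 1 := by
        rw [sq, Finset.sum_mul_sum, Finset.sum_mul]
        simp_rw [Finset.sum_mul]

theorem exists_nonneg_nsmul_add_of_kernelSum_eq (hφ : IsPositiveDefinite φ) {ι : Type*}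
    [Fintype ι] {n : ℕ} (x : Fin (n + 1) → ι → G) (c : ι → ℂ) {T : ℂ}
    (hT : ∀ m m', m ≠ m' → kernelSum φ (x m) (x m') c = T) :
    ∃ D : ℂ, ‖D‖ ≤ (∑ j, ‖c j‖) ^ 2 * φ 1 ∧ 0 ≤ n • T + D := by
  set Q := fun m m' => kernelSum φ (x m) (x m') c
  have hrows : ∑ m, ∑ m', Q m m' = ∑ m, (Q m m + n • T) := by
    refine Finset.sum_congr rfl fun m _ => ?_
    simpa using Fintype.sum_eq_add_nsmul_of_ne fun m' hm' => hT m m' (Ne.symm hm')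
  have hpos : 0 ≤ ∑ m, (Q m m + n • T) := by
    simpa [Q, hrows, kernelSum_uncurry] using
      hφ.kernelSum_nonneg (Function.uncurry x) (c ∘ Prod.snd)
  refine ⟨((n + 1 : ℕ) : ℝ)⁻¹ • ∑ m, Q m m, ?_, ?_⟩
  · calc ‖((n + 1 : ℕ) : ℝ)⁻¹ • ∑ m, Q m m‖
        ≤ ((n + 1 : ℕ) : ℝ)⁻¹ * ∑ _m : Fin (n + 1), (∑ j, ‖c j‖) ^ 2 * φ 1 := by
          rw [norm_smul, Real.norm_of_nonneg (by positivity)]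
          gcongr
          exact (norm_sum_le _ _).trans
            (Finset.sum_le_sum fun m _ => hφ.norm_kernelSum_le _ _ _)
      _ = (∑ j, ‖c j‖) ^ 2 * φ 1 := by
          rw [Finset.sum_const, Finset.card_univ, Fintype.card_fin, nsmul_eq_mul,
            inv_mul_cancel_left₀ (by positivity)]
  · have hD : n • T + ((n + 1 : ℕ) : ℝ)⁻¹ • ∑ m, Q m m =
        ((n + 1 : ℕ) : ℝ)⁻¹ • ∑ m, (Q m m + n • T) := by
      rw [Finset.sum_add_distrib, Finset.sum_const, Finset.card_univ, Fintype.card_fin, smul_add,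
        ← Nat.cast_smul_eq_nsmul ℝ (n + 1), smul_smul, inv_mul_cancel₀ (by positivity), one_smul,
        add_comm]
    exact hD ▸ smul_nonneg (by positivity) hpos

end IsPositiveDefinite

/-- Let `θ : G → S` be surjective and a morphism on an arbitrarily large subset of `G`,
and let `φ = φ̇ ∘ θ` be positive definite on `G`. Then `φ̇` is positive definite on the
semigroup `S` and bounded, with `φ̇(s) ≤ φ(e)` for all `s ∈ S`. -/
theorem posDef_radial_descends_to_semigroup
    {G S : Type*} [Group G] [AddCommSemigroup S]
    (θ : G → S) (hsurj : Function.Surjective θ)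
    (hmor : IsMorphismOnArbLargeSubset θ)
    (φ : G → ℝ) (hφ : IsPositiveDefinite φ)
    (φdot : S → ℝ) (hrad : ∀ g : G, φ g = φdot (θ g)) :
    IsPosDefSemigroup φdot ∧ ∀ s : S, φdot s ≤ φ 1 := by
  refine ⟨fun M s c => ?_, fun s => ?_⟩
  · refine Complex.nonneg_of_forall_nonneg_nsmul_add (C := (∑ j, ‖c j‖) ^ 2 * φ 1) fun n => ?_
    obtain ⟨g, hg⟩ := hmor (n + 1) M s
    refine hφ.exists_nonneg_nsmul_add_of_kernelSum_eq g c fun m m' hne => ?_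
    simp only [kernelSum, hrad, hg m m' _ _ hne]
  · obtain ⟨g, rfl⟩ := hsurj s
    exact hrad g ▸ (le_abs_self _).trans (hφ.abs_le g)
end

section
/- Let G be a group, S an additive commutative semigroup, and θ : G → S a surjective function that is a morphism on an arbitrarily large subset of G. Let ψ : G → ℝ be conditionally negative definite and radial with respect to θ, i.e., ψ = ψ̇ ∘ θ for some function ψ̇ : S → ℝ. Then ψ̇ is conditionally negative definite on the semigroup S (for all n, s₁,…,s_n ∈ S and c₁,…,c_n ∈ ℂ with ∑ c_j = 0, ∑_{j,k} c_j \overline{c_k} ψ̇(s_j + s_k) ≤ 0) and bounded below, with ψ̇(s) ≥ ψ(e) for every s ∈ S. -/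
open ComplexOrder

/-- A real-valued function on a group is conditionally negative definite. -/
def IsCondNegDef {G : Type*} [Group G] (ψ : G → ℝ) : Prop :=
  (∀ g : G, ψ g⁻¹ = ψ g) ∧
    ∀ (n : ℕ) (x : Fin n → G) (c : Fin n → ℂ), (∑ j, c j) = 0 →
      ∑ j, ∑ k, c j * (starRingEnd ℂ) (c k) * (ψ ((x j)⁻¹ * x k) : ℂ) ≤ 0

/-- A real-valued function on an additive commutative semigroup is conditionally
negative definite in the semigroup sense. -/
def IsCondNegDefSemigroup {S : Type*} [AddCommSemigroup S] (ψ : S → ℝ) : Prop :=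
  ∀ (n : ℕ) (s : Fin n → S) (c : Fin n → ℂ), (∑ j, c j) = 0 →
    ∑ j, ∑ k, c j * (starRingEnd ℂ) (c k) * (ψ (s j + s k) : ℂ) ≤ 0

/-! Given `s₁, …, s_M` and `c` with `∑ c = 0`, choose `g_{n,k}` (`n < N`) with
`θ (g_{n,j}⁻¹ g_{m,k}) = s_j + s_k` for `n ≠ m`, and test the conditional negative definiteness
of `ψ` on the family `(g_{n,k})` with coefficients `c_k`. Each of the `N (N - 1)` off-diagonal
blocks contributes the semigroup sum `Q = ∑ c_j c̄_k ψ̇ (s_j + s_k)`, while each of the `N`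
diagonal blocks is bounded independently of `N`: `ψ (x⁻¹ y) ≤ 2 ψ (z⁻¹ x) + 2 ψ (z⁻¹ y) - 3 ψ e`
with `z` taken from another block turns its entries into values of `ψ̇`. Hence `(N - 1) Q` is
bounded for all `N`, so `Q ≤ 0`. The lower bound is the test on `{e, g}` with coefficients
`(1, -1)`. -/

section HermitianSum

variable {ι : Type*} [Fintype ι]

theorem im_sum_sum_mul_conj_mul_ofReal_eq_zero (c : ι → ℂ) {K : ι → ι → ℝ}
    (hK : ∀ j k, K j k = K k j) :
    (∑ j, ∑ k, c j * starRingEnd ℂ (c k) * (K j k : ℂ)).im = 0 := by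
  refine Complex.conj_eq_iff_im.mp ?_
  simp only [map_sum, map_mul, Complex.conj_conj, Complex.conj_ofReal]
  rw [Finset.sum_comm]
  refine Finset.sum_congr rfl fun j _ => Finset.sum_congr rfl fun k _ => ?_
  rw [hK]
  ring

theorem norm_sum_sum_mul_conj_mul_ofReal_le (c : ι → ℂ) {K B : ι → ι → ℝ}
    (hKB : ∀ j k, |K j k| ≤ B j k) :
    ‖∑ j, ∑ k, c j * starRingEnd ℂ (c k) * (K j k : ℂ)‖ ≤
      ∑ j, ∑ k, ‖c j‖ * ‖c k‖ * B j k := by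
  refine norm_sum_le_of_le _ fun j _ => norm_sum_le_of_le _ fun k _ => ?_
  rw [norm_mul, norm_mul, Complex.norm_conj, Complex.norm_real, Real.norm_eq_abs]
  gcongr
  exact hKB j k

end HermitianSum

theorem card_sub_one_mul_re_le_of_offDiag_eq {α : Type*} [Fintype α] [Nonempty α]
    {F : α → α → ℂ} {Q : ℂ} {C : ℝ} (hsum : (∑ a, ∑ b, F a b).re ≤ 0)
    (hoff : ∀ a b, a ≠ b → F a b = Q) (hdiag : ∀ a, ‖F a a‖ ≤ C) :
    ((Fintype.card α : ℝ) - 1) * Q.re ≤ C := by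
  classical
  have hrow : ∀ a, ((Fintype.card α : ℝ) - 1) * Q.re - C ≤ (∑ b, F a b).re := by
    intro a
    rw [Fintype.sum_eq_add_sum_compl a,
      Finset.sum_congr rfl fun b hb => hoff a b (by simpa [eq_comm] using hb)]
    simp only [Finset.sum_const, Finset.card_compl, Finset.card_singleton, Complex.add_re,
      nsmul_eq_mul]
    rw [← Complex.ofReal_natCast, Complex.re_ofReal_mul, Nat.cast_sub Fintype.card_pos,
      Nat.cast_one]
    linarith [(abs_le.mp ((Complex.abs_re_le_norm (F a a)).trans (hdiag a))).1]
  have hcard := Finset.card_nsmul_le_sum Finset.univ _ _ fun a _ => hrow a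
  rw [← Complex.re_sum, nsmul_eq_mul, Finset.card_univ] at hcard
  have hpos : (0 : ℝ) < Fintype.card α := Nat.cast_pos.mpr Fintype.card_pos
  nlinarith

theorem nonpos_of_forall_nat_succ_mul_le {α : Type*} [Field α] [LinearOrder α]
    [IsStrictOrderedRing α] [Archimedean α] {x C : α} (h : ∀ n : ℕ, ((n : α) + 1) * x ≤ C) :
    x ≤ 0 := by
  by_contra! hx
  obtain ⟨n, hn⟩ := exists_nat_gt (C / x)
  rw [div_lt_iff₀ hx] at hn
  linarith [h n]

namespace IsCondNegDef

variable {G : Type*} [Group G] {ψ : G → ℝ}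

theorem map_inv_mul_comm (hψ : IsCondNegDef ψ) (x y : G) : ψ (x⁻¹ * y) = ψ (y⁻¹ * x) := by
  rw [← hψ.1 (y⁻¹ * x), mul_inv_rev, inv_inv]

theorem sum_le_zero (hψ : IsCondNegDef ψ) {ι : Type*} [Fintype ι] (x : ι → G) (c : ι → ℂ)
    (hc : ∑ i, c i = 0) :
    ∑ i, ∑ j, c i * starRingEnd ℂ (c j) * (ψ ((x i)⁻¹ * x j) : ℂ) ≤ 0 := by
  let e := (Fintype.equivFin ι).symm
  have reindex : ∀ f : ι → ι → ℂ, ∑ i, ∑ j, f (e i) (e j) = ∑ i, ∑ j, f i j := fun f => by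
    simp only [e.sum_comp]
    exact e.sum_comp fun i => ∑ j, f i j
  calc _ = _ := (reindex fun i j => c i * starRingEnd ℂ (c j) * (ψ ((x i)⁻¹ * x j) : ℂ)).symm
    _ ≤ 0 := hψ.2 _ (x ∘ e) (c ∘ e) (by rwa [Function.comp_def, e.sum_comp])

theorem sum_blocks_le_zero (hψ : IsCondNegDef ψ) {α ι : Type*} [Fintype α] [Fintype ι]
    (g : α → ι → G) (c : ι → ℂ) (hc : ∑ i, c i = 0) :
    ∑ a, ∑ b, ∑ j, ∑ k, c j * starRingEnd ℂ (c k) * (ψ ((g a j)⁻¹ * g b k) : ℂ) ≤ 0 := by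
  have h := hψ.sum_le_zero (fun p : α × ι => g p.1 p.2) (fun p => c p.2)
    (by simp [Fintype.sum_prod_type, hc])
  simp only [Fintype.sum_prod_type] at h
  simpa only [Finset.sum_comm (s := (Finset.univ : Finset ι)) (t := (Finset.univ : Finset α))]
    using h

theorem map_one_le (hψ : IsCondNegDef ψ) (g : G) : ψ 1 ≤ ψ g := by
  have h := hψ.2 2 ![1, g] ![1, -1] (by simp)
  simp only [Fin.sum_univ_two, Matrix.cons_val_zero, Matrix.cons_val_one,
    inv_one, mul_one, one_mul, inv_mul_cancel, hψ.1 g, map_one, map_neg] at h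
  have h' : ((2 * ψ 1 - 2 * ψ g : ℝ) : ℂ) ≤ 0 := by
    convert h using 1
    push_cast
    ring
  linarith [Complex.real_le_real.mp (h'.trans_eq Complex.ofReal_zero.symm)]

theorem le_two_mul_add_two_mul_sub (hψ : IsCondNegDef ψ) (x y z : G) :
    ψ (x⁻¹ * y) ≤ 2 * ψ (z⁻¹ * x) + 2 * ψ (z⁻¹ * y) - 3 * ψ 1 := by
  have h := hψ.2 3 ![z, x, y] ![-2, 1, 1] (by simp [Fin.sum_univ_three]; norm_num)
  simp only [Fin.sum_univ_three, Matrix.cons_val_zero, Matrix.cons_val_one, Matrix.cons_val_two,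
    Matrix.head_cons, Matrix.tail_cons, inv_mul_cancel, map_one, map_neg, map_ofNat,
    hψ.map_inv_mul_comm x z, hψ.map_inv_mul_comm y z, hψ.map_inv_mul_comm y x] at h
  have h' : ((6 * ψ 1 - 4 * ψ (z⁻¹ * x) - 4 * ψ (z⁻¹ * y) + 2 * ψ (x⁻¹ * y) : ℝ) : ℂ) ≤ 0 := by
    convert h using 1
    push_cast
    ring
  linarith [Complex.real_le_real.mp (h'.trans_eq Complex.ofReal_zero.symm)]

end IsCondNegDef

theorem IsCondNegDef.isCondNegDefSemigroup_of_radial {G S : Type*} [Group G]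
    [AddCommSemigroup S] {θ : G → S} (hmor : IsMorphismOnArbLargeSubset θ) {ψ : G → ℝ}
    (hψ : IsCondNegDef ψ) {ψdot : S → ℝ} (hrad : ∀ g, ψ g = ψdot (θ g)) :
    IsCondNegDefSemigroup ψdot := by
  intro n s c hc
  set Q := ∑ j, ∑ k, c j * starRingEnd ℂ (c k) * (ψdot (s j + s k) : ℂ)
  have hQim : Q.im = 0 := im_sum_sum_mul_conj_mul_ofReal_eq_zero c fun j k => by rw [add_comm]
  set B : Fin n → Fin n → ℝ := fun j k =>
    max |ψ 1| |2 * ψdot (s j + s j) + 2 * ψdot (s j + s k) - 3 * ψ 1|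
  have hbound : ∀ N : ℕ, ((N : ℝ) + 1) * Q.re ≤ ∑ j, ∑ k, ‖c j‖ * ‖c k‖ * B j k := by
    intro N
    obtain ⟨g, hg⟩ := hmor (N + 2) n s
    have hdiag : ∀ a j k, |ψ ((g a j)⁻¹ * g a k)| ≤ B j k := by
      intro a j k
      obtain ⟨b, hba⟩ := exists_ne a
      have hupper := hψ.le_two_mul_add_two_mul_sub (g a j) (g a k) (g b j)
      rw [hrad ((g b j)⁻¹ * g a j), hrad ((g b j)⁻¹ * g a k), hg b a j j hba,
        hg b a j k hba] at hupper
      exact abs_le_max_abs_abs (hψ.map_one_le _) hupper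
    have hoff : ∀ a b, a ≠ b →
        ∑ j, ∑ k, c j * starRingEnd ℂ (c k) * (ψ ((g a j)⁻¹ * g b k) : ℂ) = Q :=
      fun a b hab => Finset.sum_congr rfl fun j _ => Finset.sum_congr rfl fun k _ => by
        rw [hrad, hg a b j k hab]
    have h := card_sub_one_mul_re_le_of_offDiag_eq
      (Complex.le_def.mp (hψ.sum_blocks_le_zero g c hc)).1 hoff
      fun a => norm_sum_sum_mul_conj_mul_ofReal_le c (hdiag a)
    have hcard : (Fintype.card (Fin (N + 2)) : ℝ) - 1 = N + 1 := by
      rw [Fintype.card_fin]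
      push_cast
      ring
    rwa [hcard] at h
  exact Complex.le_def.mpr ⟨nonpos_of_forall_nat_succ_mul_le hbound, hQim⟩

/-- Let `θ : G → S` be surjective and a morphism on an arbitrarily large subset of `G`,
and let `ψ = ψ̇ ∘ θ` be conditionally negative definite on `G`. Then `ψ̇` is
conditionally negative definite on the semigroup `S` and bounded below, with
`ψ̇(s) ≥ ψ(e)` for all `s ∈ S`. -/
theorem condNegDef_radial_descends_to_semigroup
    {G S : Type*} [Group G] [AddCommSemigroup S]
    (θ : G → S) (hsurj : Function.Surjective θ)
    (hmor : IsMorphismOnArbLargeSubset θ)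
    (ψ : G → ℝ) (hψ : IsCondNegDef ψ)
    (ψdot : S → ℝ) (hrad : ∀ g : G, ψ g = ψdot (θ g)) :
    IsCondNegDefSemigroup ψdot ∧ ∀ s : S, ψ 1 ≤ ψdot s := by
  refine ⟨hψ.isCondNegDefSemigroup_of_radial hmor hrad, fun s => ?_⟩
  obtain ⟨g, rfl⟩ := hsurj s
  exact hrad g ▸ hψ.map_one_le g
end

section
/- Fix 0 < p ≤ 2 and let ℝ_q be the free product of q copies of the additive group ℝ (q ∈ ℕ⁺ ∪ {∞}). Then for every t > 0, the function φ : ℝ_q → ℝ defined by φ(r) := e^{−t ‖r‖_p^p} is positive definite on ℝ_q. -/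
open ComplexOrder

/-- The `p`-th power ℓ^p length on the free product of copies of the additive group `ℝ`:
for a normal form `r = x₁ ⋯ x_n` (each `x_j` a nonzero real in one copy, consecutive
copies distinct), `‖r‖_p^p = ∑ j |x_j|^p`. -/
noncomputable def lppFree {ι : Type*} [DecidableEq ι] (p : ℝ)
    (g : Monoid.CoprodI (fun _ : ι => Multiplicative ℝ)) : ℝ :=
  ((Monoid.CoprodI.Word.equiv g).toList.map
    (fun l => |Multiplicative.toAdd l.2| ^ p)).sum

/-!
Encode a reduced word as a function on *positions* `(u, i)`, a reduced prefix `u` together with a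
copy `i` of `ℝ`: its value is the letter following `u` when that letter lies in copy `i`, and `0`
otherwise. For reduced words `g`, `h`, the letters of `g⁻¹h` are those of `g` and `h` beyond their
longest common prefix, except that two first letters from the same copy merge into one; hence
`‖g⁻¹h‖_p^p = ∑ₛ |g(s) - h(s)|^p`, a sum over finitely many positions. The matrix
`e^{-t‖x_j⁻¹x_k‖_p^p}` is therefore a Hadamard product of matrices `e^{-t|a_j - a_k|^p}` with real
`a_j`, so by Schur's product theorem it suffices that these are positive semidefinite for
`0 < p ≤ 2`. For `p = 2` this is the Gaussian kernel; for `p < 2` write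
`|u|^p = C_p⁻¹ ∫₀^∞ (1 - cos uξ) ξ^{-1-p} dξ`, so that after truncating the integral the kernel is a
positive multiple of the entrywise exponential of the positive semidefinite kernel
`∫ cos((a_j - a_k)ξ) ξ^{-1-p} dξ`.
-/

open Filter MeasureTheory Set Topology

namespace Matrix

variable {n : Type*} [Fintype n]

theorem isClosed_setOf_posSemidef : IsClosed {M : Matrix n n ℝ | M.PosSemidef} := by
  simp only [posSemidef_iff_dotProduct_mulVec, ofPred_and, ofPred_forall]
  refine (isClosed_eq continuous_id.matrix_conjTranspose continuous_id).inter
    (isClosed_iInter fun x => isClosed_le continuous_const ?_)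
  exact continuous_const.dotProduct (continuous_id.matrix_mulVec continuous_const)

section RCLike

variable {𝕜 : Type*} [RCLike 𝕜]

theorem posSemidef_of_const_one : (of fun _ _ : n => (1 : 𝕜)).PosSemidef := by
  simpa [vecMulVec] using posSemidef_vecMulVec_self_star (fun _ : n => (1 : 𝕜))

theorem posSemidef_of_finsetProd {α : Type*} (s : Finset α) {F : α → Matrix n n 𝕜}
    (hF : ∀ a ∈ s, (F a).PosSemidef) : (of fun j k => ∏ a ∈ s, F a j k).PosSemidef := by
  classical
  induction s using Finset.induction_on with
  | empty => simpa using posSemidef_of_const_one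
  | insert a s ha ih =>
    convert (hF a (s.mem_insert_self a)).hadamard (ih fun b hb => hF b (s.mem_insert_of_mem hb))
      using 1
    ext j k
    simp [Finset.prod_insert ha]

theorem PosSemidef.map_pow {M : Matrix n n 𝕜} (hM : M.PosSemidef) (k : ℕ) :
    (M.map (· ^ k)).PosSemidef := by
  induction k with
  | zero => convert posSemidef_of_const_one (n := n) (𝕜 := 𝕜) using 1; ext; simp
  | succ k ih =>
    convert ih.hadamard hM using 1
    ext j k
    simp [pow_succ]

end RCLike

theorem PosSemidef.map_exp {M : Matrix n n ℝ} (hM : M.PosSemidef) :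
    (M.map Real.exp).PosSemidef := by
  have hsum : HasSum (fun k : ℕ => (k.factorial : ℝ)⁻¹ • M.map (· ^ k)) (M.map Real.exp) := by
    refine Pi.hasSum.mpr fun j => Pi.hasSum.mpr fun k => ?_
    simpa [Real.exp_eq_exp_ℝ, div_eq_inv_mul] using NormedSpace.expSeries_div_hasSum_exp (M j k)
  exact isClosed_setOf_posSemidef.mem_of_tendsto hsum.tendsto_sum_nat (Eventually.of_forall
    fun N => posSemidef_sum _ fun k _ => (hM.map_pow k).smul (by positivity))

theorem PosSemidef.map_ofReal {M : Matrix n n ℝ} (hM : M.PosSemidef) :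
    (M.map ((↑) : ℝ → ℂ)).PosSemidef := by
  obtain ⟨m, v, rfl⟩ := posSemidef_iff_eq_sum_vecMulVec.mp hM
  convert posSemidef_sum Finset.univ fun i _ =>
    posSemidef_vecMulVec_self_star (fun j => ((v i j : ℝ) : ℂ)) using 1
  ext j k
  simp [vecMulVec, Matrix.sum_apply]

theorem posSemidef_integral {X : Type*} [MeasurableSpace X] {μ : Measure X}
    {F : X → Matrix n n ℝ} (hF : ∀ᵐ ξ ∂μ, (F ξ).PosSemidef)
    (hint : ∀ j k, Integrable (fun ξ => F ξ j k) μ) :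
    (of fun j k => ∫ ξ, F ξ j k ∂μ).PosSemidef := by
  refine PosSemidef.of_dotProduct_mulVec_nonneg ?_ fun x => ?_
  · ext j k
    simp only [conjTranspose_apply, of_apply, star_trivial]
    refine integral_congr_ae ?_
    filter_upwards [hF] with ξ hξ
    exact hξ.isHermitian.apply j k
  · have hquad : star x ⬝ᵥ (of (fun j k => ∫ ξ, F ξ j k ∂μ) *ᵥ x)
        = ∫ ξ, star x ⬝ᵥ (F ξ *ᵥ x) ∂μ := by
      simp only [dotProduct, mulVec, of_apply, star_trivial]
      rw [integral_finsetSum _ fun j _ =>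
        (integrable_finsetSum _ fun k _ => (hint j k).mul_const _).const_mul _]
      refine Finset.sum_congr rfl fun j _ => ?_
      rw [integral_const_mul, integral_finsetSum _ fun k _ => (hint j k).mul_const _]
      simp_rw [integral_mul_const]
    rw [hquad]
    refine integral_nonneg_of_ae ?_
    filter_upwards [hF] with ξ hξ
    exact hξ.dotProduct_mulVec_nonneg x

end Matrix

section LevyIntegral

open Real

variable {p : ℝ}

theorem one_sub_cos_mul_mul_rpow_le {ξ : ℝ} (hξ : 0 < ξ) (u : ℝ) :
    (1 - cos (u * ξ)) * ξ ^ (-1 - p) ≤ u ^ 2 / 2 * ξ ^ (1 - p) := by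
  have hξ2 : ξ ^ (2 : ℝ) * ξ ^ (-1 - p) = ξ ^ (1 - p) := by
    rw [← rpow_add hξ]; congr 1; ring
  calc (1 - cos (u * ξ)) * ξ ^ (-1 - p) ≤ (u * ξ) ^ 2 / 2 * ξ ^ (-1 - p) :=
        mul_le_mul_of_nonneg_right (by linarith [one_sub_sq_div_two_le_cos (x := u * ξ)])
          (rpow_pos_of_pos hξ _).le
    _ = u ^ 2 / 2 * ξ ^ (1 - p) := by
        rw [← hξ2, rpow_two]; ring

theorem integrableOn_one_sub_cos_mul_rpow (hp0 : 0 < p) (hp2 : p < 2) (u : ℝ) :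
    IntegrableOn (fun ξ : ℝ => (1 - cos (u * ξ)) * ξ ^ (-1 - p)) (Ioi 0) := by
  have hcont : ContinuousOn (fun ξ : ℝ => (1 - cos (u * ξ)) * ξ ^ (-1 - p)) (Ioi 0) :=
    (by fun_prop : Continuous fun ξ : ℝ => 1 - cos (u * ξ)).continuousOn.mul
      fun ξ hξ => (continuousAt_rpow_const ξ _ (Or.inl (ne_of_gt hξ))).continuousWithinAt
  have hnonneg : ∀ ξ ∈ Ioi (0 : ℝ), 0 ≤ (1 - cos (u * ξ)) * ξ ^ (-1 - p) := fun ξ hξ =>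
    mul_nonneg (by linarith [cos_le_one (u * ξ)]) (rpow_nonneg (le_of_lt hξ) _)
  rw [← Ioc_union_Ioi_eq_Ioi zero_le_one, integrableOn_union]
  constructor
  · refine Integrable.mono'
      (((intervalIntegral.intervalIntegrable_rpow' (r := 1 - p) (by linarith)).1).const_mul
        (u ^ 2 / 2))
      ((hcont.mono Ioc_subset_Ioi_self).aestronglyMeasurable measurableSet_Ioc) ?_
    filter_upwards [ae_restrict_mem measurableSet_Ioc] with ξ hξ
    rw [norm_of_nonneg (hnonneg ξ hξ.1)]
    exact one_sub_cos_mul_mul_rpow_le hξ.1 u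
  · refine Integrable.mono'
      ((integrableOn_Ioi_rpow_of_lt (a := -1 - p) (by linarith) one_pos).const_mul 2)
      ((hcont.mono (Ioi_subset_Ioi zero_le_one)).aestronglyMeasurable measurableSet_Ioi) ?_
    filter_upwards [ae_restrict_mem measurableSet_Ioi] with ξ hξ
    have hξ0 : (0 : ℝ) < ξ := one_pos.trans hξ
    rw [norm_of_nonneg (hnonneg ξ hξ0)]
    exact mul_le_mul_of_nonneg_right (by linarith [neg_one_le_cos (u * ξ)])
      (rpow_pos_of_pos hξ0 _).le

/-- The constant `C_p` in `|u|^p = C_p⁻¹ ∫₀^∞ (1 - cos uξ) ξ^{-1-p} dξ`. -/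
noncomputable def levyConst (p : ℝ) : ℝ := ∫ ξ in Ioi (0 : ℝ), (1 - cos ξ) * ξ ^ (-1 - p)

theorem levyConst_pos (hp0 : 0 < p) (hp2 : p < 2) : 0 < levyConst p := by
  have hint := integrableOn_one_sub_cos_mul_rpow hp0 hp2 1
  simp only [one_mul] at hint
  have hpos : ∀ ξ ∈ Ioo (1 : ℝ) 2, 0 < (1 - cos ξ) * ξ ^ (-1 - p) := by
    intro ξ hξ
    have hcos : cos ξ ≠ 1 := fun h => by
      have hξ0 := (cos_eq_one_iff_of_lt_of_lt (by linarith [pi_gt_three, hξ.1])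
        (by linarith [pi_gt_three, hξ.2])).mp h
      linarith [hξ.1]
    exact mul_pos (by linarith [(cos_le_one ξ).lt_of_ne hcos])
      (rpow_pos_of_pos (by linarith [hξ.1]) _)
  calc 0 < ∫ ξ in (1 : ℝ)..2, (1 - cos ξ) * ξ ^ (-1 - p) :=
        intervalIntegral.intervalIntegral_pos_of_pos_on
          ((intervalIntegrable_iff_integrableOn_Ioc_of_le one_le_two).mpr
            (hint.mono_set (Ioc_subset_Ioi_self.trans (Ioi_subset_Ioi zero_le_one))))
          hpos one_lt_two
    _ ≤ levyConst p := by
        rw [intervalIntegral.integral_of_le one_le_two]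
        refine setIntegral_mono_set hint ?_ (Eventually.of_forall fun ξ hξ => ?_)
        · filter_upwards [ae_restrict_mem measurableSet_Ioi] with ξ hξ
          exact mul_nonneg (by linarith [cos_le_one ξ]) (rpow_nonneg (le_of_lt hξ) _)
        · exact (zero_lt_one.trans hξ.1 : (0 : ℝ) < ξ)

theorem integral_one_sub_cos_mul_rpow (hp0 : 0 < p) (u : ℝ) :
    ∫ ξ in Ioi (0 : ℝ), (1 - cos (u * ξ)) * ξ ^ (-1 - p) = |u| ^ p * levyConst p := by
  rcases eq_or_ne u 0 with rfl | hu
  · simp [zero_rpow hp0.ne']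
  have ha : 0 < |u| := abs_pos.mpr hu
  have hsubst := integral_comp_mul_left_Ioi (fun s : ℝ => (1 - cos s) * s ^ (-1 - p)) 0 ha
  rw [mul_zero] at hsubst
  calc ∫ ξ in Ioi (0 : ℝ), (1 - cos (u * ξ)) * ξ ^ (-1 - p)
      = ∫ ξ in Ioi (0 : ℝ), |u| ^ (1 + p) * ((1 - cos (|u| * ξ)) * (|u| * ξ) ^ (-1 - p)) := by
        refine setIntegral_congr_fun measurableSet_Ioi fun ξ (hξ : 0 < ξ) => ?_
        have hcos : cos (u * ξ) = cos (|u| * ξ) := by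
          rcases abs_choice u with h | h <;> simp [h]
        have hpow : |u| ^ (1 + p) * |u| ^ (-1 - p) = 1 := by
          rw [← rpow_add ha]; norm_num
        rw [mul_rpow ha.le hξ.le, hcos]
        linear_combination (-(1 - cos (|u| * ξ)) * ξ ^ (-1 - p)) * hpow
    _ = |u| ^ p * levyConst p := by
        rw [integral_const_mul, hsubst, smul_eq_mul, ← mul_assoc, levyConst,
          ← rpow_neg_one, ← rpow_add ha]
        norm_num

end LevyIntegral

section RealKernels

open Real Matrix

variable {n : Type*} [Fintype n] {p t : ℝ}

theorem posSemidef_cos_sub (v : n → ℝ) : (of fun j k => cos (v j - v k)).PosSemidef := by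
  convert (posSemidef_vecMulVec_self_star (cos ∘ v)).add
    (posSemidef_vecMulVec_self_star (sin ∘ v)) using 1
  ext j k
  simp [vecMulVec, cos_sub]

theorem posSemidef_exp_neg_mul_sub_sq (ht : 0 ≤ t) (v : n → ℝ) :
    (of fun j k => exp (-t * (v j - v k) ^ 2)).PosSemidef := by
  classical
  have hexp := (((posSemidef_vecMulVec_self_star v).smul (by positivity : (0 : ℝ) ≤ 2 * t)).map_exp)
  convert hexp.conjTranspose_mul_mul_same (diagonal fun j => exp (-t * v j ^ 2)) using 1
  ext j k
  simp only [of_apply, diagonal_conjTranspose, diagonal_mul, mul_diagonal, map_apply,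
    Matrix.smul_apply, vecMulVec_apply, star_trivial, smul_eq_mul, ← exp_add]
  ring_nf

theorem integrableOn_cos_mul_mul_rpow_Ioi (hp0 : 0 < p) {a : ℝ} (ha : 0 < a) (u : ℝ) :
    IntegrableOn (fun ξ : ℝ => cos (u * ξ) * ξ ^ (-1 - p)) (Ioi a) :=
  (integrableOn_Ioi_rpow_of_lt (by linarith) ha).bdd_mul (c := 1) (by fun_prop)
    (Eventually.of_forall fun ξ => by simpa using abs_cos_le_one (u * ξ))

theorem posSemidef_integral_cos_mul_rpow {a : ℝ} (hp0 : 0 < p) (ha : 0 < a) (v : n → ℝ) :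
    (of fun j k => ∫ ξ in Ioi a, cos ((v j - v k) * ξ) * ξ ^ (-1 - p)).PosSemidef := by
  refine posSemidef_integral (F := fun ξ => of fun j k => cos ((v j - v k) * ξ) * ξ ^ (-1 - p))
    ?_ fun j k => integrableOn_cos_mul_mul_rpow_Ioi hp0 ha _
  filter_upwards [ae_restrict_mem measurableSet_Ioi] with ξ hξ
  convert (posSemidef_cos_sub fun j => v j * ξ).smul
    (rpow_nonneg (ha.trans hξ).le (-1 - p)) using 1
  ext j k
  simp [sub_mul, mul_comm (ξ ^ (-1 - p))]

/-- Away from `ξ = 0` the weight `ξ ^ (-1 - p)` is integrable, so the exponent splits into a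
constant and a positive semidefinite kernel. -/
theorem posSemidef_exp_neg_mul_integral_one_sub_cos {a c : ℝ} (hp0 : 0 < p) (ha : 0 < a)
    (hc : 0 ≤ c) (v : n → ℝ) :
    (of fun j k =>
      exp (-c * ∫ ξ in Ioi a, (1 - cos ((v j - v k) * ξ)) * ξ ^ (-1 - p))).PosSemidef := by
  have hw : IntegrableOn (fun ξ : ℝ => ξ ^ (-1 - p)) (Ioi a) :=
    integrableOn_Ioi_rpow_of_lt (by linarith) ha
  convert (((posSemidef_integral_cos_mul_rpow hp0 ha v).smul hc).map_exp).smul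
    (exp_nonneg (-c * ∫ ξ in Ioi a, ξ ^ (-1 - p))) using 1
  ext j k
  have hsplit : ∫ ξ in Ioi a, (1 - cos ((v j - v k) * ξ)) * ξ ^ (-1 - p)
      = (∫ ξ in Ioi a, ξ ^ (-1 - p)) - ∫ ξ in Ioi a, cos ((v j - v k) * ξ) * ξ ^ (-1 - p) := by
    rw [← integral_sub hw (integrableOn_cos_mul_mul_rpow_Ioi hp0 ha _)]
    simp_rw [sub_mul, one_mul]
  simp only [of_apply, Matrix.smul_apply, map_apply, smul_eq_mul, ← exp_add, hsplit]
  ring_nf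

theorem posSemidef_exp_neg_mul_abs_sub_rpow_of_lt_two (hp0 : 0 < p) (hp2 : p < 2) (ht : 0 ≤ t)
    (v : n → ℝ) : (of fun j k => exp (-t * |v j - v k| ^ p)).PosSemidef := by
  have hC := levyConst_pos hp0 hp2
  set a : ℕ → ℝ := fun m => ((m : ℝ) + 1)⁻¹
  have ha : ∀ m, 0 < a m := fun m => by positivity
  have hunion : (⋃ m, Ioi (a m)) = Ioi 0 := by
    ext ξ
    simp only [mem_iUnion, mem_Ioi]
    refine ⟨fun ⟨m, hm⟩ => (ha m).trans hm, fun hξ => ?_⟩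
    obtain ⟨m, hm⟩ := exists_nat_one_div_lt hξ
    exact ⟨m, by simpa [a] using hm⟩
  have hmono : Monotone fun m => Ioi (a m) := fun m m' h =>
    Ioi_subset_Ioi (inv_anti₀ (by positivity) (by gcongr))
  have hlim : Tendsto (fun m => of fun j k =>
      exp (-(t / levyConst p) * ∫ ξ in Ioi (a m), (1 - cos ((v j - v k) * ξ)) * ξ ^ (-1 - p)))
      atTop (𝓝 (of fun j k => exp (-t * |v j - v k| ^ p))) := by
    refine tendsto_pi_nhds.2 fun j => tendsto_pi_nhds.2 fun k => ?_
    have hint := tendsto_setIntegral_of_monotone (fun m => measurableSet_Ioi) hmono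
      (f := fun ξ : ℝ => (1 - cos ((v j - v k) * ξ)) * ξ ^ (-1 - p))
      (by rw [hunion]; exact integrableOn_one_sub_cos_mul_rpow hp0 hp2 _)
    rw [hunion, integral_one_sub_cos_mul_rpow hp0] at hint
    have hexp := (continuous_exp.tendsto _).comp (hint.const_mul (-(t / levyConst p)))
    rwa [show -(t / levyConst p) * (|v j - v k| ^ p * levyConst p) = -t * |v j - v k| ^ p by
      field_simp] at hexp
  exact isClosed_setOf_posSemidef.mem_of_tendsto hlim (Eventually.of_forall fun m =>
    posSemidef_exp_neg_mul_integral_one_sub_cos hp0 (ha m) (div_nonneg ht hC.le) v)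

theorem posSemidef_exp_neg_mul_abs_sub_rpow (hp0 : 0 < p) (hp2 : p ≤ 2) (ht : 0 ≤ t)
    (v : n → ℝ) : (of fun j k => exp (-t * |v j - v k| ^ p)).PosSemidef := by
  rcases hp2.lt_or_eq with hp2 | rfl
  · exact posSemidef_exp_neg_mul_abs_sub_rpow_of_lt_two hp0 hp2 ht v
  · simpa [Real.rpow_two, sq_abs] using posSemidef_exp_neg_mul_sub_sq ht v

end RealKernels

theorem Finset.sum_union_abs_sub_rpow {X : Type*} [DecidableEq X] {p : ℝ} (hp : 0 < p)
    {A B : Finset X} {f g : X → ℝ} (hg : ∀ s ∈ A, g s = 0) (hf : ∀ s ∈ B, f s = 0) :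
    ∑ s ∈ A ∪ B, |f s - g s| ^ p = ∑ s ∈ A, |f s| ^ p + ∑ s ∈ B, |g s| ^ p := by
  have hinter : ∑ s ∈ A ∩ B, |f s - g s| ^ p = 0 := Finset.sum_eq_zero fun s hs => by
    rw [Finset.mem_inter] at hs
    rw [hf s hs.2, hg s hs.1, sub_zero, abs_zero, Real.zero_rpow hp.ne']
  rw [← add_zero (∑ s ∈ A ∪ B, _), ← hinter, Finset.sum_union_inter]
  congr 1
  · exact Finset.sum_congr rfl fun s hs => by rw [hg s hs, sub_zero]
  · exact Finset.sum_congr rfl fun s hs => by rw [hf s hs, zero_sub, abs_neg]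

namespace RealCoprodI

open Monoid.CoprodI

variable {ι : Type*} {p : ℝ}

abbrev Letter (ι : Type*) := Σ _ : ι, Multiplicative ℝ

noncomputable def lppList (p : ℝ) (l : List (Letter ι)) : ℝ :=
  (l.map fun a => |Multiplicative.toAdd a.2| ^ p).sum

@[simp] theorem lppList_cons (a : Letter ι) (l : List (Letter ι)) :
    lppList p (a :: l) = |Multiplicative.toAdd a.2| ^ p + lppList p l := by
  simp [lppList]

@[simp] theorem lppList_append (l₁ l₂ : List (Letter ι)) :
    lppList p (l₁ ++ l₂) = lppList p l₁ + lppList p l₂ := by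
  simp [lppList]

def IsReduced (l : List (Letter ι)) : Prop :=
  (∀ a ∈ l, a.2 ≠ 1) ∧ l.IsChain fun a b => a.1 ≠ b.1

theorem IsReduced.tail {a : Letter ι} {l : List (Letter ι)} (h : IsReduced (a :: l)) :
    IsReduced l :=
  ⟨fun b hb => h.1 b (List.mem_cons_of_mem _ hb), h.2.tail⟩

noncomputable def listProd (l : List (Letter ι)) : Monoid.CoprodI fun _ : ι => Multiplicative ℝ :=
  (l.map fun a => of (i := a.1) a.2).prod

@[simp] theorem listProd_cons (a : Letter ι) (l : List (Letter ι)) :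
    listProd (a :: l) = of (i := a.1) a.2 * listProd l := by
  simp [listProd]

@[simp] theorem listProd_append (l₁ l₂ : List (Letter ι)) :
    listProd (l₁ ++ l₂) = listProd l₁ * listProd l₂ := by
  simp [listProd]

def invList (l : List (Letter ι)) : List (Letter ι) :=
  (l.map fun a => ⟨a.1, a.2⁻¹⟩).reverse

@[simp] theorem listProd_invList (l : List (Letter ι)) : listProd (invList l) = (listProd l)⁻¹ := by
  induction l with
  | nil => rfl
  | cons a l ih => simp_all [invList, listProd]

@[simp] theorem lppList_invList (l : List (Letter ι)) : lppList p (invList l) = lppList p l := by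
  simp [invList, lppList, List.sum_reverse, Function.comp_def, abs_neg]

theorem IsReduced.invList_append {l₁ l₂ : List (Letter ι)} (h₁ : IsReduced l₁)
    (h₂ : IsReduced l₂) (h : ∀ a ∈ l₁.head?, ∀ b ∈ l₂.head?, a.1 ≠ b.1) :
    IsReduced (invList l₁ ++ l₂) := by
  refine ⟨fun a ha => ?_, ?_⟩
  · simp only [invList, List.mem_append, List.mem_reverse, List.mem_map] at ha
    rcases ha with ⟨b, hb, rfl⟩ | ha
    · simpa using h₁.1 b hb
    · exact h₂.1 a ha
  · rw [invList, List.isChain_append, List.isChain_reverse, List.isChain_map,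
      List.getLast?_reverse, List.head?_map]
    refine ⟨h₁.2.imp fun {_ _} hne => Ne.symm hne, h₂.2, ?_⟩
    simp only [Option.mem_def, Option.map_eq_some_iff]
    rintro _ ⟨a, ha, rfl⟩ b hb
    exact h a ha b hb

variable [DecidableEq ι]

theorem lppFree_listProd {l : List (Letter ι)} (h : IsReduced l) :
    lppFree p (listProd l) = lppList p l := by
  have hword : Word.equiv (listProd l) = ⟨l, h.1, h.2⟩ :=
    Word.equiv.apply_symm_apply ⟨l, h.1, h.2⟩
  rw [lppFree, hword]
  rfl

theorem listProd_toList (g : Monoid.CoprodI fun _ : ι => Multiplicative ℝ) :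
    listProd (Word.equiv g).toList = g :=
  Word.equiv.symm_apply_apply g

theorem isReduced_toList (g : Monoid.CoprodI fun _ : ι => Multiplicative ℝ) :
    IsReduced (Word.equiv g).toList :=
  ⟨(Word.equiv g).ne_one, (Word.equiv g).chain_ne⟩

theorem lppFree_inv_mul_of_isReduced {l₁ l₂ : List (Letter ι)}
    (h : IsReduced (invList l₁ ++ l₂)) :
    lppFree p ((listProd l₁)⁻¹ * listProd l₂) = lppList p l₁ + lppList p l₂ := by
  rw [← listProd_invList, ← listProd_append, lppFree_listProd h, lppList_append, lppList_invList]

/-- No cancellation between the two words: the reduced form of `l₁⁻¹ l₂` is `l₁⁻¹ ++ l₂`. -/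
theorem lppFree_inv_mul_of_fst_ne {l₁ l₂ : List (Letter ι)} (h₁ : IsReduced l₁)
    (h₂ : IsReduced l₂) (h : ∀ a ∈ l₁.head?, ∀ b ∈ l₂.head?, a.1 ≠ b.1) :
    lppFree p ((listProd l₁)⁻¹ * listProd l₂) = lppList p l₁ + lppList p l₂ :=
  lppFree_inv_mul_of_isReduced (h₁.invList_append h₂ h)

/-- The first letters lie in the same copy of `ℝ` and merge into the single letter `x⁻¹ y`. -/
theorem lppFree_inv_mul_cons_of_ne {i : ι} {x y : Multiplicative ℝ} (hxy : x ≠ y)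
    {r₁ r₂ : List (Letter ι)} (h₁ : IsReduced (⟨i, x⟩ :: r₁)) (h₂ : IsReduced (⟨i, y⟩ :: r₂)) :
    lppFree p ((listProd (⟨i, x⟩ :: r₁))⁻¹ * listProd (⟨i, y⟩ :: r₂))
      = |Multiplicative.toAdd x - Multiplicative.toAdd y| ^ p + lppList p r₁ + lppList p r₂ := by
  have hmerge : IsReduced (⟨i, x⁻¹ * y⟩ :: r₂ : List (Letter ι)) := by
    refine ⟨?_, List.isChain_cons.mpr ⟨(List.isChain_cons.mp h₂.2).1, h₂.2.tail⟩⟩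
    rintro a (_ | ⟨_, ha⟩)
    · exact fun h => hxy (inv_mul_eq_one.mp h)
    · exact h₂.1 a (List.mem_cons_of_mem _ ha)
  have hhead : ∀ a ∈ r₁.head?, ∀ b ∈ (⟨i, x⁻¹ * y⟩ :: r₂ : List (Letter ι)).head?, a.1 ≠ b.1 := by
    rintro a ha b ⟨⟩
    exact fun h => (List.isChain_cons.mp h₁.2).1 a ha h.symm
  have hprod : (listProd (⟨i, x⟩ :: r₁))⁻¹ * listProd (⟨i, y⟩ :: r₂)
      = (listProd r₁)⁻¹ * listProd (⟨i, x⁻¹ * y⟩ :: r₂ : List (Letter ι)) := by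
    simp only [listProd_cons, map_mul, map_inv, mul_inv_rev]
    group
  rw [hprod, lppFree_inv_mul_of_fst_ne h₁.tail hmerge hhead, lppList_cons]
  have habs : |Multiplicative.toAdd (x⁻¹ * y)|
      = |Multiplicative.toAdd x - Multiplicative.toAdd y| := by
    rw [toAdd_mul, toAdd_inv, ← abs_neg]; ring_nf
  rw [habs]; ring

/-- A position `(u, i)` is a prefix `u` together with the copy `i` of the letter following it. -/
abbrev Position (ι : Type*) := List (Letter ι) × ι

def shift (a : Letter ι) (s : Position ι) : Position ι := (a :: s.1, s.2)

noncomputable def coord : List (Letter ι) → Position ι → ℝ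
  | [], _ => 0
  | a :: _, ([], i) => if a.1 = i then Multiplicative.toAdd a.2 else 0
  | a :: r, (b :: u, i) => if b = a then coord r (u, i) else 0

noncomputable def positions : List (Letter ι) → Finset (Position ι)
  | [] => ∅
  | a :: r => insert ([], a.1) ((positions r).image (shift a))

@[simp] theorem coord_nil (s : Position ι) : coord [] s = 0 := rfl

theorem coord_cons_nil (a : Letter ι) (r : List (Letter ι)) (i : ι) :
    coord (a :: r) ([], i) = if a.1 = i then Multiplicative.toAdd a.2 else 0 := rfl

theorem coord_cons_shift (a b : Letter ι) (r : List (Letter ι)) (s : Position ι) :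
    coord (a :: r) (shift b s) = if b = a then coord r s else 0 := rfl

@[simp] theorem coord_cons_shift_self (a : Letter ι) (r : List (Letter ι)) (s : Position ι) :
    coord (a :: r) (shift a s) = coord r s := if_pos rfl

theorem coord_eq_zero_of_notMem {l : List (Letter ι)} {s : Position ι}
    (hs : s ∉ positions l) : coord l s = 0 := by
  induction l generalizing s with
  | nil => rfl
  | cons a r ih =>
    obtain ⟨_ | ⟨b, u⟩, i⟩ := s
    · refine if_neg fun h => hs ?_
      rw [← h]
      exact Finset.mem_insert_self _ _
    · rw [show ((b :: u, i) : Position ι) = shift b (u, i) from rfl, coord_cons_shift]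
      split_ifs with hba
      · subst hba
        exact ih fun h => hs (Finset.mem_insert_of_mem (Finset.mem_image_of_mem _ h))
      · rfl

theorem nil_notMem_image_shift (a : Letter ι) (P : Finset (Position ι)) (i : ι) :
    (([], i) : Position ι) ∉ P.image (shift a) := by
  simp [shift]

theorem sum_image_shift (a : Letter ι) (P : Finset (Position ι)) (f : Position ι → ℝ) :
    ∑ s ∈ P.image (shift a), f s = ∑ s ∈ P, f (shift a s) :=
  Finset.sum_image fun _ _ _ _ h => Prod.ext (List.cons_injective (congrArg Prod.fst h))
    (congrArg Prod.snd h :)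

theorem sum_positions_abs_coord (l : List (Letter ι)) :
    ∑ s ∈ positions l, |coord l s| ^ p = lppList p l := by
  induction l with
  | nil => rfl
  | cons a r ih =>
    rw [positions, Finset.sum_insert (nil_notMem_image_shift _ _ _), sum_image_shift,
      coord_cons_nil, if_pos rfl]
    simp_rw [coord_cons_shift_self, ih, lppList_cons]

theorem coord_eq_zero_of_mem_positions {a b : Letter ι} (hab : a.1 ≠ b.1)
    {r₁ r₂ : List (Letter ι)} {s : Position ι} (hs : s ∈ positions (a :: r₁)) :
    coord (b :: r₂) s = 0 := by
  rw [positions, Finset.mem_insert, Finset.mem_image] at hs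
  rcases hs with rfl | ⟨s, -, rfl⟩
  · exact if_neg fun h => hab h.symm
  · exact if_neg fun h => hab (congrArg Sigma.fst h)

theorem sum_positions_union_of_fst_ne (hp : 0 < p) {l₁ l₂ : List (Letter ι)}
    (h : ∀ a ∈ l₁.head?, ∀ b ∈ l₂.head?, a.1 ≠ b.1) :
    ∑ s ∈ positions l₁ ∪ positions l₂, |coord l₁ s - coord l₂ s| ^ p
      = lppList p l₁ + lppList p l₂ := by
  rw [Finset.sum_union_abs_sub_rpow hp, sum_positions_abs_coord, sum_positions_abs_coord]
  · rcases l₁ with _ | ⟨a, r₁⟩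
    · simp [positions]
    rcases l₂ with _ | ⟨b, r₂⟩
    · simp
    exact fun s hs => coord_eq_zero_of_mem_positions (h a rfl b rfl) hs
  · rcases l₂ with _ | ⟨b, r₂⟩
    · simp [positions]
    rcases l₁ with _ | ⟨a, r₁⟩
    · simp
    exact fun s hs => coord_eq_zero_of_mem_positions (h a rfl b rfl).symm hs

theorem sum_positions_union_cons_self (hp : 0 < p) (a : Letter ι) (r₁ r₂ : List (Letter ι)) :
    ∑ s ∈ positions (a :: r₁) ∪ positions (a :: r₂), |coord (a :: r₁) s - coord (a :: r₂) s| ^ p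
      = ∑ s ∈ positions r₁ ∪ positions r₂, |coord r₁ s - coord r₂ s| ^ p := by
  rw [positions, positions, ← Finset.insert_union_distrib, ← Finset.image_union,
    Finset.sum_insert (nil_notMem_image_shift _ _ _), sum_image_shift, coord_cons_nil,
    coord_cons_nil, sub_self, abs_zero, Real.zero_rpow hp.ne', zero_add]
  simp_rw [coord_cons_shift_self]

theorem sum_positions_union_cons_of_ne (hp : 0 < p) {i : ι} {x y : Multiplicative ℝ}
    (hxy : x ≠ y) (r₁ r₂ : List (Letter ι)) :
    ∑ s ∈ positions (⟨i, x⟩ :: r₁) ∪ positions (⟨i, y⟩ :: r₂),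
        |coord (⟨i, x⟩ :: r₁) s - coord (⟨i, y⟩ :: r₂) s| ^ p
      = |Multiplicative.toAdd x - Multiplicative.toAdd y| ^ p + lppList p r₁ + lppList p r₂ := by
  have hne : (⟨i, x⟩ : Letter ι) ≠ ⟨i, y⟩ := fun h => hxy (eq_of_heq (Sigma.mk.inj h).2)
  rw [positions, positions, ← Finset.insert_union_distrib, Finset.sum_insert (by simp [shift]),
    coord_cons_nil, coord_cons_nil, if_pos rfl, if_pos rfl, add_assoc,
    Finset.sum_union_abs_sub_rpow hp, sum_image_shift, sum_image_shift]
  · simp_rw [coord_cons_shift_self, sum_positions_abs_coord]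
  · simp only [Finset.mem_image]
    rintro _ ⟨s, -, rfl⟩
    exact if_neg hne
  · simp only [Finset.mem_image]
    rintro _ ⟨s, -, rfl⟩
    exact if_neg hne.symm

theorem sum_positions_union_eq_lppFree (hp : 0 < p) {l₁ l₂ : List (Letter ι)}
    (h₁ : IsReduced l₁) (h₂ : IsReduced l₂) :
    ∑ s ∈ positions l₁ ∪ positions l₂, |coord l₁ s - coord l₂ s| ^ p
      = lppFree p ((listProd l₁)⁻¹ * listProd l₂) := by
  induction l₁ generalizing l₂ with
  | nil =>
    rw [sum_positions_union_of_fst_ne hp (by simp), lppFree_inv_mul_of_fst_ne h₁ h₂ (by simp)]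
  | cons a r₁ ih =>
    rcases l₂ with _ | ⟨b, r₂⟩
    · rw [sum_positions_union_of_fst_ne hp (by simp), lppFree_inv_mul_of_fst_ne h₁ h₂ (by simp)]
    by_cases hab : a.1 = b.1
    · obtain ⟨i, x⟩ := a
      obtain ⟨j, y⟩ := b
      obtain rfl : i = j := hab
      by_cases hxy : x = y
      · subst hxy
        rw [sum_positions_union_cons_self hp, ih h₁.tail h₂.tail]
        simp [mul_assoc]
      · rw [sum_positions_union_cons_of_ne hp hxy, lppFree_inv_mul_cons_of_ne hxy h₁ h₂]
    · have hfst : ∀ a' ∈ (a :: r₁).head?, ∀ b' ∈ (b :: r₂).head?, a'.1 ≠ b'.1 := by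
        simpa using hab
      rw [sum_positions_union_of_fst_ne hp hfst, lppFree_inv_mul_of_fst_ne h₁ h₂ hfst]

theorem lppFree_inv_mul_eq_sum (hp : 0 < p) (g h : Monoid.CoprodI fun _ : ι => Multiplicative ℝ)
    {S : Finset (Position ι)}
    (hS : positions (Word.equiv g).toList ∪ positions (Word.equiv h).toList ⊆ S) :
    lppFree p (g⁻¹ * h)
      = ∑ s ∈ S, |coord (Word.equiv g).toList s - coord (Word.equiv h).toList s| ^ p := by
  rw [← Finset.sum_subset hS fun s _ hs => ?_,
    sum_positions_union_eq_lppFree hp (isReduced_toList g) (isReduced_toList h),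
    listProd_toList, listProd_toList]
  rw [Finset.mem_union, not_or] at hs
  rw [coord_eq_zero_of_notMem hs.1, coord_eq_zero_of_notMem hs.2, sub_zero, abs_zero,
    Real.zero_rpow hp.ne']

theorem posSemidef_exp_neg_mul_lppFree {n : Type*} [Fintype n] {t : ℝ} (hp0 : 0 < p)
    (hp2 : p ≤ 2) (ht : 0 ≤ t) (x : n → Monoid.CoprodI fun _ : ι => Multiplicative ℝ) :
    (Matrix.of fun j k => Real.exp (-t * lppFree p ((x j)⁻¹ * x k))).PosSemidef := by
  let w j := (Word.equiv (x j)).toList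
  let S := Finset.univ.biUnion fun j => positions (w j)
  have hprod : (Matrix.of fun j k => Real.exp (-t * lppFree p ((x j)⁻¹ * x k)))
      = Matrix.of fun j k => ∏ s ∈ S, Real.exp (-t * |coord (w j) s - coord (w k) s| ^ p) := by
    ext j k
    have hS : positions (w j) ∪ positions (w k) ⊆ S := Finset.union_subset
      (Finset.subset_biUnion_of_mem (fun j => positions (w j)) (Finset.mem_univ j))
      (Finset.subset_biUnion_of_mem (fun j => positions (w j)) (Finset.mem_univ k))
    rw [Matrix.of_apply, Matrix.of_apply, lppFree_inv_mul_eq_sum hp0 _ _ hS, Finset.mul_sum,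
      Real.exp_sum]
  rw [hprod]
  exact Matrix.posSemidef_of_finsetProd S fun s _ =>
    posSemidef_exp_neg_mul_abs_sub_rpow hp0 hp2 ht fun j => coord (w j) s

end RealCoprodI

theorem isPositiveDefinite_of_posSemidef {G : Type*} [Group G] {φ : G → ℝ}
    (h : ∀ (n : ℕ) (x : Fin n → G), (Matrix.of fun j k => φ ((x j)⁻¹ * x k)).PosSemidef) :
    IsPositiveDefinite φ := by
  intro n x c
  convert ((h n x).map_ofReal).dotProduct_mulVec_nonneg (star c) using 1
  simp [dotProduct, Matrix.mulVec, Finset.mul_sum, mul_comm, mul_left_comm]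

theorem exp_neg_lppFree_posDef_general
    {ι : Type*} [DecidableEq ι]
    (p : ℝ) (hp0 : 0 < p) (hp2 : p ≤ 2) (t : ℝ) (ht : 0 < t) :
    IsPositiveDefinite
      (fun r : Monoid.CoprodI (fun _ : ι => Multiplicative ℝ) =>
        Real.exp (-t * lppFree p r)) :=
  isPositiveDefinite_of_posSemidef fun _ x =>
    RealCoprodI.posSemidef_exp_neg_mul_lppFree hp0 hp2 ht.le x

/-- (Bożejko) For `0 < p ≤ 2` and every `t > 0`, the function `r ↦ e^{−t‖r‖_p^p}` is
positive definite on the free product `ℝ_q` of `q` copies of `ℝ`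
(`q` a positive natural number or countably infinite). -/
theorem exp_neg_lppFree_posDef
    {ι : Type*} [DecidableEq ι] [Countable ι] [Nonempty ι]
    (p : ℝ) (hp0 : 0 < p) (hp2 : p ≤ 2) (t : ℝ) (ht : 0 < t) :
    IsPositiveDefinite
      (fun r : Monoid.CoprodI (fun _ : ι => Multiplicative ℝ) =>
        Real.exp (-t * lppFree p r)) :=
  exp_neg_lppFree_posDef_general p hp0 hp2 t ht
end

section
/- Fix 0 < p ≤ 2. The p-th power ℓ^p length function ‖·‖_p^p : ℝ^{(ℕ)} → ℝ≥0 on the additive group ℝ^{(ℕ)} of finitely supported real sequences is a morphism on an arbitrarily large subset: for every N ∈ ℕ, M ∈ ℕ and every choice of nonnegative reals r₁, …, r_M, there exist elements q_{n,k} ∈ ℝ^{(ℕ)} (for 1 ≤ n ≤ N, 1 ≤ k ≤ M) such that ‖q_{m,k} − q_{n,j}‖_p^p = r_j + r_k whenever n ≠ m. -/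
open ComplexOrder

/-- The `p`-th power ℓ^p length `‖r‖_p^p = ∑ n |r n|^p` of a finitely supported real
sequence. -/
noncomputable def lppFinsupp (p : ℝ) (r : ℕ →₀ ℝ) : ℝ :=
  ∑ n ∈ r.support, |r n| ^ p

lemma lppFinsupp_single_sub_single (p : ℝ) (hp0 : 0 < p) {a b : ℕ} (hab : a ≠ b)
    (x y : ℝ) :
    lppFinsupp p (Finsupp.single a x - Finsupp.single b y) = |x| ^ p + |y| ^ p := by
  set f : ℕ →₀ ℝ := Finsupp.single a x - Finsupp.single b y with hf
  have hfa : f a = x := by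
    simp [hf, Finsupp.single_apply, hab, Ne.symm hab]
  have hfb : f b = -y := by
    simp [hf, Finsupp.single_apply, hab, Ne.symm hab]
  have hsub : f.support ⊆ ({a, b} : Finset ℕ) := by
    intro n hn
    simp only [Finset.mem_insert, Finset.mem_singleton]
    by_contra h
    push_neg at h
    have : f n = 0 := by
      simp [hf, Finsupp.single_apply, Ne.symm h.1, Ne.symm h.2]
    exact Finsupp.mem_support_iff.mp hn this
  have : lppFinsupp p f = ∑ n ∈ ({a, b} : Finset ℕ), |f n| ^ p := by
    unfold lppFinsupp
    refine Finset.sum_subset hsub ?_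
    intro n _ hn
    have : f n = 0 := Finsupp.notMem_support_iff.mp hn
    rw [this, abs_zero, Real.zero_rpow hp0.ne']
  rw [this, Finset.sum_pair hab, hfa, hfb, abs_neg]

/-- For `0 < p ≤ 2`, the function `‖·‖_p^p` on the additive group `ℝ^{(ℕ)}` of finitely
supported real sequences is a morphism on an arbitrarily large subset. -/
theorem lppFinsupp_morphism_on_arbitrarily_large_subset
    (p : ℝ) (hp0 : 0 < p) (hp2 : p ≤ 2)
    (N M : ℕ) (r : Fin M → ℝ) (hr : ∀ j, 0 ≤ r j) :
    ∃ q : Fin N → Fin M → (ℕ →₀ ℝ),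
      ∀ (n m : Fin N) (j k : Fin M), n ≠ m →
        lppFinsupp p (q m k - q n j) = r j + r k := by
  refine ⟨fun n k => Finsupp.single n.val ((r k) ^ (1 / p)), ?_⟩
  intro n m j k hnm
  have hmn : (m : ℕ) ≠ (n : ℕ) := fun h => hnm (Fin.ext h).symm
  rw [lppFinsupp_single_sub_single p hp0 hmn]
  have key : ∀ i : Fin M, |r i ^ (1 / p)| ^ p = r i := by
    intro i
    rw [abs_of_nonneg (Real.rpow_nonneg (hr i) _), ← Real.rpow_mul (hr i)]
    simp [one_div, inv_mul_cancel₀ hp0.ne']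
  rw [key, key, add_comm]
end
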